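/- arXiv:math/0509031 — 10 statements merged into one kernel-verified Lean document; each statement's English description precedes it below -/
import Mathlib

section
/- Let u, v : ℝ → ℂ be Lebesgue measurable functions and [a,b] ⊂ ℝ a nonempty interval. Assume that for all x ∈ [a,b], u(t)·v(t+x) = 0 for almost every t ∈ ℝ. Then for every t₀ in the support of u (as a distribution/essential support), v(t) = 0 for almost every t ∈ [t₀+a, t₀+b]. -/
/-!
By Fubini, the hypothesis can be read the other way round: for almost every `t`, the product
`u t * v (t + x)` vanishes for almost every `x ∈ [a, b]`, so wherever `u t ≠ 0` the function `v`
vanishes a.e. on `[t + a, t + b]`. Since `t₀` is in the essential support of `u`, such good `t`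
accumulate at `t₀`, and the intervals `[t + a, t + b]` cover the open interval
`(t₀ + a, t₀ + b)`, which differs from `[t₀ + a, t₀ + b]` by a null set.
-/

open MeasureTheory Set Filter Topology

theorem ae_ne_zero_imp_ae_eq_zero_on_shift {G M : Type*} [MeasurableSpace G] [AddCommGroup G]
    [MeasurableAdd₂ G] [MeasurableNeg G] {μ : Measure G} [SFinite μ] [μ.IsAddRightInvariant]
    [MulZeroClass M] [NoZeroDivisors M] [MeasurableSpace M] [MeasurableSingletonClass M]
    [MeasurableMul₂ M] {u v : G → M} (hu : Measurable u) (hv : Measurable v)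
    {S : Set G} (hS : MeasurableSet S) (h : ∀ x ∈ S, ∀ᵐ t ∂μ, u t * v (t + x) = 0) :
    ∀ᵐ t ∂μ, u t ≠ 0 → ∀ᵐ s ∂μ, s - t ∈ S → v s = 0 := by
  have hprod : MeasurableSet {z : G × G | u z.2 * v (z.2 + z.1) = 0} :=
    ((hu.comp measurable_snd).mul (hv.comp (measurable_snd.add measurable_fst)))
      (measurableSet_singleton 0)
  have hswap : ∀ᵐ t ∂μ, ∀ᵐ x ∂μ.restrict S, u t * v (t + x) = 0 :=
    (Measure.ae_ae_comm hprod).1 ((ae_restrict_iff' hS).2 (.of_forall h))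
  filter_upwards [hswap] with t ht hut
  have hshift : ∀ᵐ x ∂μ, x ∈ S → v (t + x) = 0 :=
    ((ae_restrict_iff' hS).1 ht).mono fun x hx hxS =>
      (mul_eq_zero.1 (hx hxS)).resolve_left hut
  filter_upwards [(measurePreserving_sub_right μ t).quasiMeasurePreserving.tendsto_ae.eventually
    hshift] with s hs
  simpa only [add_sub_cancel] using hs

theorem mem_closure_setOf_of_ae_ne_zero_imp {M : Type*} [Zero M] {μ : Measure ℝ} {u : ℝ → M}
    {P : ℝ → Prop} {t₀ : ℝ} (hP : ∀ᵐ t ∂μ, u t ≠ 0 → P t)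
    (ht₀ : ∀ ε > 0, 0 < μ {t ∈ Ioo (t₀ - ε) (t₀ + ε) | u t ≠ 0}) :
    t₀ ∈ closure {t | P t} := by
  refine Metric.mem_closure_iff.2 fun ε hε => ?_
  by_contra! hfar
  have hnull : μ {t ∈ Ioo (t₀ - ε) (t₀ + ε) | u t ≠ 0} = 0 := by
    refine measure_mono_null (fun t ht (hPt : u t ≠ 0 → P t) =>
      (hfar t (hPt ht.2)).not_gt ?_) (ae_iff.1 hP)
    rw [dist_comm, Real.dist_eq, abs_sub_lt_iff]
    constructor <;> linarith [ht.1.1, ht.1.2]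
  exact (ht₀ ε hε).ne' hnull

theorem ae_eq_zero_on_Icc_of_tendsto {M : Type*} [Zero M] {μ : Measure ℝ} [NullSingletonClass μ]
    {v : ℝ → M} {a b t₀ : ℝ} {t : ℕ → ℝ} (ht : Tendsto t atTop (𝓝 t₀))
    (hv : ∀ n, ∀ᵐ s ∂μ, s ∈ Icc (t n + a) (t n + b) → v s = 0) :
    ∀ᵐ s ∂μ, s ∈ Icc (t₀ + a) (t₀ + b) → v s = 0 := by
  filter_upwards [ae_all_iff.2 hv, (Ioo_ae_eq_Icc (μ := μ)).mem_iff] with s hs hIoo hmem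
  -- `s` lies in `[t n + a, t n + b]` as soon as `t n ∈ (s - b, s - a)`, a neighbourhood of `t₀`
  obtain ⟨n, hn⟩ := (ht.eventually (Ioo_mem_nhds (a := s - b) (b := s - a)
    (by linarith [(hIoo.2 hmem).2]) (by linarith [(hIoo.2 hmem).1]))).exists
  exact hs n ⟨by linarith [hn.2], by linarith [hn.1]⟩

theorem stmt0_general (u v : ℝ → ℂ) (a b : ℝ)
    (hu : Measurable u) (hv : Measurable v)
    (h : ∀ x ∈ Icc a b, ∀ᵐ t : ℝ, u t * v (t + x) = 0)
    (t₀ : ℝ)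
    (ht₀ : ∀ ε > 0, 0 < volume {t ∈ Ioo (t₀ - ε) (t₀ + ε) | u t ≠ 0}) :
    ∀ᵐ t : ℝ, t ∈ Icc (t₀ + a) (t₀ + b) → v t = 0 := by
  have hgood : ∀ᵐ t, u t ≠ 0 → ∀ᵐ s, s ∈ Icc (t + a) (t + b) → v s = 0 :=
    (ae_ne_zero_imp_ae_eq_zero_on_shift hu hv measurableSet_Icc h).mono fun t ht hut => by
      simpa only [sub_mem_Icc_iff_left, add_comm t] using ht hut
  obtain ⟨t, hgood_t, hlim⟩ :=
    mem_closure_iff_seq_limit.1 (mem_closure_setOf_of_ae_ne_zero_imp hgood ht₀)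
  exact ae_eq_zero_on_Icc_of_tendsto hlim hgood_t

theorem stmt0 (u v : ℝ → ℂ) (a b : ℝ) (hab : a ≤ b)
    (hu : Measurable u) (hv : Measurable v)
    (h : ∀ x ∈ Icc a b, ∀ᵐ t : ℝ, u t * v (t + x) = 0)
    (t₀ : ℝ)
    (ht₀ : ∀ ε > 0, 0 < volume {t ∈ Ioo (t₀ - ε) (t₀ + ε) | u t ≠ 0}) :
    ∀ᵐ t : ℝ, t ∈ Icc (t₀ + a) (t₀ + b) → v t = 0 :=
  stmt0_general u v a b hu hv h t₀ ht₀
end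

section
/- Let Λ, Λ' ⊆ ℤ. Assume that every element of Λ+Λ+Λ can be written uniquely, up to permutation, as n₁+n₂+n₃ with n₁,n₂,n₃ ∈ Λ (i.e., Λ is a B₃-set). If Λ' - Λ' = Λ - Λ, then there exists m ∈ ℤ such that Λ' = Λ - m or Λ' = m - Λ. -/
open Set Pointwise

lemma pair_aux (b c e f : ℤ) (h : ({b,c} : Multiset ℤ) = {e,f}) :
    (b=e∧c=f)∨(b=f∧c=e) := by
  simp only [Multiset.insert_eq_cons] at h
  rcases Multiset.cons_eq_cons.mp h with ⟨rfl, h2⟩ | ⟨hne, cs, h2, h3⟩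
  · exact Or.inl ⟨rfl, by simpa using h2⟩
  · obtain ⟨rfl, rfl⟩ := (Multiset.singleton_eq_cons_iff _).mp h2
    obtain ⟨rfl, -⟩ := (Multiset.singleton_eq_cons_iff _).mp h3
    exact Or.inr ⟨rfl, rfl⟩

lemma triple_aux (a b c d e f : ℤ) (h : ({a,b,c} : Multiset ℤ) = {d,e,f}) :
    (a=d∧b=e∧c=f)∨(a=d∧b=f∧c=e)∨(a=e∧b=d∧c=f)∨(a=e∧b=f∧c=d)∨(a=f∧b=d∧c=e)∨(a=f∧b=e∧c=d) := by
  have ha : a ∈ ({d,e,f} : Multiset ℤ) := h ▸ (by simp)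
  simp only [Multiset.insert_eq_cons, Multiset.mem_cons, Multiset.mem_singleton] at ha
  simp only [Multiset.insert_eq_cons, ← Multiset.cons_zero] at h
  rcases ha with rfl | rfl | rfl
  · have h2 := (Multiset.cons_inj_right a).mp h
    rcases pair_aux _ _ _ _ (by simpa [Multiset.insert_eq_cons, ← Multiset.cons_zero] using h2) with ⟨h3,h4⟩|⟨h3,h4⟩
    · exact Or.inl ⟨rfl, h3, h4⟩
    · exact Or.inr (Or.inl ⟨rfl, h3, h4⟩)
  · rw [Multiset.cons_swap d a] at h
    have h2 := (Multiset.cons_inj_right a).mp h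
    rcases pair_aux _ _ _ _ (by simpa [Multiset.insert_eq_cons, ← Multiset.cons_zero] using h2) with ⟨h3,h4⟩|⟨h3,h4⟩
    · exact Or.inr (Or.inr (Or.inl ⟨rfl, h3, h4⟩))
    · exact Or.inr (Or.inr (Or.inr (Or.inl ⟨rfl, h3, h4⟩)))
  · rw [Multiset.cons_swap e a, Multiset.cons_swap d a] at h
    have h2 := (Multiset.cons_inj_right a).mp h
    rcases pair_aux _ _ _ _ (by simpa [Multiset.insert_eq_cons, ← Multiset.cons_zero] using h2) with ⟨h3,h4⟩|⟨h3,h4⟩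
    · exact Or.inr (Or.inr (Or.inr (Or.inr (Or.inl ⟨rfl, h3, h4⟩))))
    · exact Or.inr (Or.inr (Or.inr (Or.inr (Or.inr ⟨rfl, h3, h4⟩))))

theorem stmt1 (Λ Λ' : Set ℤ)
    (hB3 : ∀ n₁ ∈ Λ, ∀ n₂ ∈ Λ, ∀ n₃ ∈ Λ, ∀ m₁ ∈ Λ, ∀ m₂ ∈ Λ, ∀ m₃ ∈ Λ,
      n₁ + n₂ + n₃ = m₁ + m₂ + m₃ →
      ({n₁, n₂, n₃} : Multiset ℤ) = ({m₁, m₂, m₃} : Multiset ℤ))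
    (hdiff : Λ' - Λ' = Λ - Λ) :
    ∃ m : ℤ, Λ' = (fun x => x - m) '' Λ ∨ Λ' = (fun x => m - x) '' Λ := by
  -- transfer lemmas
  have h1 : ∀ b ∈ Λ', ∀ b' ∈ Λ', ∃ x ∈ Λ, ∃ y ∈ Λ, b - b' = x - y := by
    intro b hb b' hb'
    have : b - b' ∈ Λ' - Λ' := Set.sub_mem_sub hb hb'
    rw [hdiff] at this
    obtain ⟨x, hx, y, hy, hxy⟩ := Set.mem_sub.mp this
    exact ⟨x, hx, y, hy, hxy.symm⟩
  have h2 : ∀ a ∈ Λ, ∀ a' ∈ Λ, ∃ c ∈ Λ', ∃ c' ∈ Λ', a - a' = c - c' := by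
    intro a ha a' ha'
    have : a - a' ∈ Λ - Λ := Set.sub_mem_sub ha ha'
    rw [← hdiff] at this
    obtain ⟨c, hc, c', hc', hcc⟩ := Set.mem_sub.mp this
    exact ⟨c, hc, c', hc', hcc.symm⟩
  rcases Λ.eq_empty_or_nonempty with rfl | ⟨a₀, ha₀⟩
  · refine ⟨0, Or.inl ?_⟩
    have hE : Λ' = ∅ := by
      rw [Set.eq_empty_iff_forall_notMem]
      intro b hb
      obtain ⟨x, hx, -⟩ := h1 b hb b hb
      exact hx
    simp [hE]
  -- Sidon property
  have hS : ∀ x ∈ Λ, ∀ y ∈ Λ, ∀ u ∈ Λ, ∀ v ∈ Λ, x - y = u - v →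
      (x = u ∧ y = v) ∨ (x = y ∧ u = v) := by
    intro x hx y hy u hu v hv hxy
    have := hB3 x hx v hv a₀ ha₀ u hu y hy a₀ ha₀ (by omega)
    rcases triple_aux _ _ _ _ _ _ this with ⟨e1,e2,e3⟩|⟨e1,e2,e3⟩|⟨e1,e2,e3⟩|⟨e1,e2,e3⟩|⟨e1,e2,e3⟩|⟨e1,e2,e3⟩ <;> omega
  by_cases hsing : ∀ a' ∈ Λ, a' = a₀
  · -- Λ is a singleton
    obtain ⟨b₀, hb₀⟩ : Λ'.Nonempty := by
      obtain ⟨c, hc, -⟩ := h2 a₀ ha₀ a₀ ha₀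
      exact ⟨c, hc⟩
    have hone : ∀ b ∈ Λ', b = b₀ := by
      intro b hb
      obtain ⟨x, hx, y, hy, hxy⟩ := h1 b hb b₀ hb₀
      have := hsing x hx
      have := hsing y hy
      omega
    refine ⟨a₀ - b₀, Or.inl ?_⟩
    ext z
    constructor
    · intro hz
      exact ⟨a₀, ha₀, by have := hone z hz; simp; omega⟩
    · rintro ⟨a, ha, rfl⟩
      have := hsing a ha
      simp only
      have : a - (a₀ - b₀) = b₀ := by omega
      rw [this]; exact hb₀
  · push_neg at hsing
    obtain ⟨a₁, ha₁, hne⟩ := hsing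
    obtain ⟨b₁, hb₁, b₀, hb₀, hbb⟩ := h2 a₁ ha₁ a₀ ha₀
    -- hbb : a₁ - a₀ = b₁ - b₀
    set m : ℤ := a₀ - b₀ with hm
    set m' : ℤ := b₀ + a₁ with hm'
    -- Step 1: dichotomy for each element of Λ'
    have key : ∀ b ∈ Λ', b + m ∈ Λ ∨ m' - b ∈ Λ := by
      intro b hb
      by_cases hb0 : b = b₀
      · left; have : b + m = a₀ := by omega
        rw [this]; exact ha₀
      by_cases hb1 : b = b₁
      · left; have : b + m = a₁ := by omega
        rw [this]; exact ha₁
      obtain ⟨x, hx, y, hy, hxy⟩ := h1 b hb b₀ hb₀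
      obtain ⟨u, hu, v, hv, huv⟩ := h1 b hb b₁ hb₁
      have hmul := hB3 x hx v hv a₀ ha₀ a₁ ha₁ y hy u hu (by omega)
      rcases triple_aux _ _ _ _ _ _ hmul with ⟨e1,e2,e3⟩|⟨e1,e2,e3⟩|⟨e1,e2,e3⟩|⟨e1,e2,e3⟩|⟨e1,e2,e3⟩|⟨e1,e2,e3⟩
      · -- x=a₁, v=y, a₀=u : reflection, m' - b = y
        right; have : m' - b = y := by omega
        rw [this]; exact hy
      · -- x=a₁, v=u, a₀=y : b = b₁, contradiction
        exact absurd (by omega : b = b₁) hb1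
      · -- x=y : b = b₀
        exact absurd (by omega : b = b₀) hb0
      · -- x=y : b = b₀
        exact absurd (by omega : b = b₀) hb0
      · -- x=u, v=a₁, a₀=y : translation, b + m = x
        left; have : b + m = x := by omega
        rw [this]; exact hx
      · -- x=u, v=y, a₀=a₁ : contradiction
        exact absurd (by omega : a₁ = a₀) hne
    -- Step 2: no genuinely mixed pair
    have hmix : ∀ b ∈ Λ', ∀ b' ∈ Λ', b + m ∈ Λ → m' - b' ∈ Λ →
        m' - b ∈ Λ ∨ b' + m ∈ Λ := by
      intro b hb b' hb' hxL hyL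
      obtain ⟨s, hs, t, ht, hst⟩ := h1 b hb b' hb'
      have hmul := hB3 (b+m) hxL (m'-b') hyL t ht a₀ ha₀ a₁ ha₁ s hs (by omega)
      rcases triple_aux _ _ _ _ _ _ hmul with ⟨e1,e2,e3⟩|⟨e1,e2,e3⟩|⟨e1,e2,e3⟩|⟨e1,e2,e3⟩|⟨e1,e2,e3⟩|⟨e1,e2,e3⟩
      · -- b+m = a₀ ⇒ b = b₀ ⇒ m'-b = a₁
        left; have : m' - b = a₁ := by omega
        rw [this]; exact ha₁
      · left; have : m' - b = a₁ := by omega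
        rw [this]; exact ha₁
      · -- b+m = a₁ ⇒ b = b₁ ⇒ m'-b = a₀
        left; have : m' - b = a₀ := by omega
        rw [this]; exact ha₀
      · left; have : m' - b = a₀ := by omega
        rw [this]; exact ha₀
      · -- b+m = s, m'-b' = a₀ ⇒ b' = b₁ ⇒ b'+m = a₁
        right; have : b' + m = a₁ := by omega
        rw [this]; exact ha₁
      · right; have : b' + m = a₀ := by omega
        rw [this]; exact ha₀
    by_cases hT : ∀ b ∈ Λ', b + m ∈ Λ
    · -- translation case
      refine ⟨m, Or.inl ?_⟩
      ext z
      simp only [Set.mem_image]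
      constructor
      · intro hz
        exact ⟨z + m, hT z hz, by omega⟩
      · rintro ⟨a, ha, rfl⟩
        obtain ⟨c, hc, c', hc', hcc⟩ := h2 a ha a₀ ha₀
        have hcm := hT c hc
        have hcm' := hT c' hc'
        rcases hS (c+m) hcm (c'+m) hcm' a ha a₀ ha₀ (by omega) with ⟨e1,e2⟩|⟨e1,e2⟩
        · have : a - m = c := by omega
          rw [this]; exact hc
        · have : a - m = b₀ := by omega
          rw [this]; exact hb₀
    · -- reflection case
      push_neg at hT
      obtain ⟨w, hw, hwm⟩ := hT
      have hwr : m' - w ∈ Λ := (key w hw).resolve_left hwm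
      have hR : ∀ b ∈ Λ', m' - b ∈ Λ := by
        intro b hb
        rcases key b hb with hbt | hbr
        · rcases hmix b hb w hw hbt hwr with h | h
          · exact h
          · exact absurd h hwm
        · exact hbr
      refine ⟨m', Or.inr ?_⟩
      ext z
      simp only [Set.mem_image]
      constructor
      · intro hz
        exact ⟨m' - z, hR z hz, by omega⟩
      · rintro ⟨a, ha, rfl⟩
        obtain ⟨c, hc, c', hc', hcc⟩ := h2 a ha a₀ ha₀
        have hcm := hR c hc
        have hcm' := hR c' hc'
        rcases hS (m'-c') hcm' (m'-c) hcm a ha a₀ ha₀ (by omega) with ⟨e1,e2⟩|⟨e1,e2⟩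
        · have : m' - a = c' := by omega
          rw [this]; exact hc'
        · have : m' - a = b₁ := by omega
          rw [this]; exact hb₁
end

section
/- Let Λ ⊆ ℤ and c : Λ → ℂ with |c(n)| = 1 for all n, satisfying: c(n₁)·conj(c(n₂)) = c(n₃)·conj(c(n₄)) whenever n₁ - n₂ = n₃ - n₄ with all nᵢ ∈ Λ. Then for every finitely supported sequence a supported in Λ, the sequence b with b_j = c(j)·a_j (and 0 off Λ) satisfies |𝒜(a)(k,t)| = |𝒜(b)(k,t)| for all k ∈ ℤ, t ∈ ℝ. -/
/-!
By the hypothesis on `c`, the phase `c j * conj (c (j - k))` is the same for every pair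
`j, j - k ∈ Λ`, so on the support of the summand of `𝒜(a)(k, ·)` it is a single unimodular
constant `u`. Since `b = c * a`, this gives `𝒜(b)(k, t) = u * 𝒜(a)(k, t)`.
-/

noncomputable def discAmb (a : ℤ → ℂ) (k : ℤ) (t : ℝ) : ℂ :=
  ∑ᶠ j : ℤ, a j * (starRingEnd ℂ) (a (j - k)) * Complex.exp (Complex.I * j * t)

open ComplexConjugate

theorem discAmb_eq_mul_of_forall_mul_conj {a b : ℤ → ℂ} {k : ℤ} (u : ℂ)
    (h : ∀ j, b j * conj (b (j - k)) = u * (a j * conj (a (j - k)))) (t : ℝ) :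
    discAmb b k t = u * discAmb a k t := by
  rw [discAmb, discAmb, mul_finsum]
  exact finsum_congr fun j => by rw [h j]; ring

theorem exists_norm_eq_one_forall_mul_conj_eq {Λ : Set ℤ} {c : ℤ → ℂ}
    (hc : ∀ n ∈ Λ, ‖c n‖ = 1)
    (hcond : ∀ n₁ ∈ Λ, ∀ n₂ ∈ Λ, ∀ n₃ ∈ Λ, ∀ n₄ ∈ Λ, n₁ - n₂ = n₃ - n₄ →
      c n₁ * conj (c n₂) = c n₃ * conj (c n₄))
    {a : ℤ → ℂ} (haΛ : Function.support a ⊆ Λ) (k : ℤ) :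
    ∃ u : ℂ, ‖u‖ = 1 ∧ ∀ j, a j * conj (a (j - k)) ≠ 0 → c j * conj (c (j - k)) = u := by
  have mem_of_ne_zero : ∀ {j}, a j * conj (a (j - k)) ≠ 0 → j ∈ Λ ∧ j - k ∈ Λ := fun h =>
    ⟨haΛ (left_ne_zero_of_mul h), haΛ (by simpa using right_ne_zero_of_mul h)⟩
  by_cases hS : ∃ j₀, a j₀ * conj (a (j₀ - k)) ≠ 0
  · obtain ⟨j₀, hj₀⟩ := hS
    obtain ⟨hj₀Λ, hj₀kΛ⟩ := mem_of_ne_zero hj₀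
    refine ⟨c j₀ * conj (c (j₀ - k)), by simp [hc _ hj₀Λ, hc _ hj₀kΛ], fun j hj => ?_⟩
    obtain ⟨hjΛ, hjkΛ⟩ := mem_of_ne_zero hj
    exact hcond j hjΛ (j - k) hjkΛ j₀ hj₀Λ (j₀ - k) hj₀kΛ (by ring)
  · exact ⟨1, norm_one, fun j hj => absurd ⟨j, hj⟩ hS⟩

theorem stmt7_general (Λ : Set ℤ) [DecidablePred (· ∈ Λ)] (c : ℤ → ℂ) (hc : ∀ n ∈ Λ, ‖c n‖ = 1)
    (hcond : ∀ n₁ ∈ Λ, ∀ n₂ ∈ Λ, ∀ n₃ ∈ Λ, ∀ n₄ ∈ Λ, n₁ - n₂ = n₃ - n₄ →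
      c n₁ * (starRingEnd ℂ) (c n₂) = c n₃ * (starRingEnd ℂ) (c n₄))
    (a : ℤ → ℂ)
    (haΛ : Function.support a ⊆ Λ)
    (b : ℤ → ℂ) (hb : ∀ j : ℤ, b j = if j ∈ Λ then c j * a j else 0) :
    ∀ (k : ℤ) (t : ℝ), ‖discAmb a k t‖ = ‖discAmb b k t‖ := by
  intro k t
  have hb' : ∀ j, b j = c j * a j := fun j => by
    rw [hb]
    split_ifs with hj
    · rfl
    · simp [Function.notMem_support.mp (mt (@haΛ j) hj)]
  obtain ⟨u, hu, hcu⟩ := exists_norm_eq_one_forall_mul_conj_eq hc hcond haΛ k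
  have hbu : ∀ j, b j * conj (b (j - k)) = u * (a j * conj (a (j - k))) := fun j => by
    rw [hb', hb', map_mul, mul_mul_mul_comm]
    by_cases hj : a j * conj (a (j - k)) = 0
    · rw [hj, mul_zero, mul_zero]
    · rw [hcu j hj]
  rw [discAmb_eq_mul_of_forall_mul_conj u hbu, norm_mul, hu, one_mul]

theorem stmt7 (Λ : Set ℤ) [DecidablePred (· ∈ Λ)] (c : ℤ → ℂ) (hc : ∀ n ∈ Λ, ‖c n‖ = 1)
    (hcond : ∀ n₁ ∈ Λ, ∀ n₂ ∈ Λ, ∀ n₃ ∈ Λ, ∀ n₄ ∈ Λ, n₁ - n₂ = n₃ - n₄ →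
      c n₁ * (starRingEnd ℂ) (c n₂) = c n₃ * (starRingEnd ℂ) (c n₄))
    (a : ℤ → ℂ) (ha : (Function.support a).Finite)
    (haΛ : Function.support a ⊆ Λ)
    (b : ℤ → ℂ) (hb : ∀ j : ℤ, b j = if j ∈ Λ then c j * a j else 0) :
    ∀ (k : ℤ) (t : ℝ), ‖discAmb a k t‖ = ‖discAmb b k t‖ :=
  stmt7_general Λ c hc hcond a haΛ b hb
end

section
/- For a polynomial P ∈ ℂ[Z] of degree n, let 𝒫ˇ(z) = (-1)^n·P(-z). Then {P', P}₋ := P'·Pˇ - (P')ˇ·P = 0 if and only if Pˇ = P (for monic P). -/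
open Polynomial

/-- For a polynomial `P` of degree `n`, `Pˇ(z) = (-1)^n P(-z)`. -/
noncomputable def checkPoly (P : Polynomial ℂ) : Polynomial ℂ :=
  ((-1 : ℂ) ^ P.natDegree) • P.comp (-Polynomial.X)

lemma checkPoly_monic (P : Polynomial ℂ) (hP : P.Monic) : (checkPoly P).Monic := by
  unfold checkPoly
  rw [Monic, smul_eq_C_mul, leadingCoeff_mul, leadingCoeff_C]
  rcases eq_or_ne P.natDegree 0 with h0 | h0
  · rw [h0, pow_zero, one_mul]
    have : P = 1 := hP.natDegree_eq_zero.mp h0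
    simp [this]
  · rw [leadingCoeff_comp (by simp), hP.leadingCoeff, one_mul]
    simp only [leadingCoeff_neg, leadingCoeff_X]
    rw [← pow_add]
    exact Even.neg_one_pow ⟨P.natDegree, rfl⟩

lemma key (P Q : Polynomial ℂ) (hP : P.Monic) (hQ : Q.Monic)
    (h : derivative P * Q = derivative Q * P) : P = Q := by
  have hP0 : P ≠ 0 := hP.ne_zero
  have hQ0 : Q ≠ 0 := hQ.ne_zero
  set g := GCDMonoid.gcd P Q with hg
  have hg0 : g ≠ 0 := gcd_ne_zero_of_left hP0
  set p := P / g with hpdef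
  set q := Q / g with hqdef
  have hcp : IsCoprime p q := isCoprime_div_gcd_div_gcd hQ0
  have hPe : P = g * p := (EuclideanDomain.mul_div_cancel' hg0 (gcd_dvd_left P Q)).symm
  have hQe : Q = g * q := (EuclideanDomain.mul_div_cancel' hg0 (gcd_dvd_right P Q)).symm
  have h2 : g * g * (derivative p * q) = g * g * (derivative q * p) := by
    rw [hPe, hQe, derivative_mul, derivative_mul] at h
    linear_combination h
  have h3 : derivative p * q = derivative q * p :=
    mul_left_cancel₀ (mul_ne_zero hg0 hg0) h2
  have hw : wronskian p q = 0 := by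
    rw [wronskian, h3]; ring
  obtain ⟨hp', hq'⟩ := hcp.wronskian_eq_zero_iff.mp hw
  obtain ⟨a, ha⟩ : ∃ a, p = C a :=
    ⟨p.coeff 0, eq_C_of_natDegree_eq_zero (natDegree_eq_zero_of_derivative_eq_zero hp')⟩
  obtain ⟨b, hb⟩ : ∃ b, q = C b :=
    ⟨q.coeff 0, eq_C_of_natDegree_eq_zero (natDegree_eq_zero_of_derivative_eq_zero hq')⟩
  have hla : g.leadingCoeff * a = 1 := by
    have := hP.leadingCoeff
    rw [hPe, ha, leadingCoeff_mul, leadingCoeff_C] at this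
    exact this
  have hlb : g.leadingCoeff * b = 1 := by
    have := hQ.leadingCoeff
    rw [hQe, hb, leadingCoeff_mul, leadingCoeff_C] at this
    exact this
  have hab : a = b := by
    have hlg : g.leadingCoeff ≠ 0 := leadingCoeff_ne_zero.mpr hg0
    exact mul_left_cancel₀ hlg (hla.trans hlb.symm)
  rw [hPe, hQe, ha, hb, hab]

theorem stmt8 (P : Polynomial ℂ) (hP : P.Monic) :
    derivative P * checkPoly P - derivative (checkPoly P) * P = 0 ↔ checkPoly P = P := by
  constructor
  · intro h
    exact (key P (checkPoly P) hP (checkPoly_monic P hP) (sub_eq_zero.mp h)).symm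
  · intro h
    rw [h, sub_self]
end

section
/- For a polynomial 𝒫 ∈ ℂ[Z] of degree n, define the ambiguity polynomial A_𝒫(z,w) = Σ_{m=0}^n (1/m!)·𝒫^{(m)}(z)·𝒫*^{(m)}(w), where 𝒫*(w) = conj(𝒫(conj w)). Then for polynomials 𝒫, 𝒬, A_𝒫 = A_𝒬 if and only if there exists a unimodular constant c with 𝒫 = c·𝒬. -/
open Polynomial

/-- The ambiguity function `A_𝒫(z,w) = Σ_{m=0}^{deg 𝒫} (1/m!) 𝒫^{(m)}(z) 𝒫*^{(m)}(w)`,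
where `𝒫*` has conjugated coefficients. -/
noncomputable def ambPoly (P : Polynomial ℂ) (z w : ℂ) : ℂ :=
  ∑ m ∈ Finset.range (P.natDegree + 1),
    (1 / (Nat.factorial m : ℂ)) * ((derivative^[m] P).eval z) *
      ((derivative^[m] (P.map (starRingEnd ℂ))).eval w)

/-! Fix `z` and read `w ↦ A_P(z, w)` as a polynomial in `w`. For `n ≥ deg P` only the term `m = 0`
reaches its coefficient of `w^n`, which is therefore `P(z) · conj (P_n)`. With `n = max (deg P, deg Q)`,
equal ambiguity functions thus force `conj (P_n) • P = conj (Q_n) • Q`; comparing `n`-th coefficients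
once more gives `|P_n| = |Q_n|`, and `c = conj (Q_n) / conj (P_n)`. -/

noncomputable def ambPolySlice (P : ℂ[X]) (z : ℂ) : ℂ[X] :=
  ∑ m ∈ Finset.range (P.natDegree + 1),
    C (1 / (m.factorial : ℂ) * (derivative^[m] P).eval z) *
      derivative^[m] (P.map (starRingEnd ℂ))

lemma eval_ambPolySlice (P : ℂ[X]) (z w : ℂ) :
    (ambPolySlice P z).eval w = ambPoly P z w := by
  simp only [ambPolySlice, ambPoly, eval_finsetSum, eval_mul, eval_C]

lemma coeff_ambPolySlice (P : ℂ[X]) (z : ℂ) {n : ℕ} (hn : P.natDegree ≤ n) :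
    (ambPolySlice P z).coeff n = P.eval z * starRingEnd ℂ (P.coeff n) := by
  rw [ambPolySlice, finsetSum_coeff, Finset.sum_eq_single 0]
  · simp
  · intro m _ hm
    rw [coeff_C_mul, coeff_iterate_derivative, coeff_map,
      coeff_eq_zero_of_natDegree_lt (by omega : P.natDegree < n + m)]
    simp
  · simp

lemma conj_coeff_smul_eq_of_ambPoly_eq {P Q : ℂ[X]}
    (h : ∀ z w : ℂ, ambPoly P z w = ambPoly Q z w) {n : ℕ}
    (hP : P.natDegree ≤ n) (hQ : Q.natDegree ≤ n) :
    starRingEnd ℂ (P.coeff n) • P = starRingEnd ℂ (Q.coeff n) • Q := by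
  refine Polynomial.funext fun z => ?_
  have hslice : ambPolySlice P z = ambPolySlice Q z :=
    Polynomial.funext fun w => by rw [eval_ambPolySlice, eval_ambPolySlice, h]
  have htop := congrArg (coeff · n) hslice
  simp only [coeff_ambPolySlice P z hP, coeff_ambPolySlice Q z hQ] at htop
  simpa only [eval_smul, smul_eq_mul, mul_comm] using htop

lemma ambPoly_smul (c : ℂ) (P : ℂ[X]) (z w : ℂ) :
    ambPoly (c • P) z w = c * starRingEnd ℂ c * ambPoly P z w := by
  rcases eq_or_ne c 0 with rfl | hc
  · simp [ambPoly]
  rw [ambPoly, ambPoly, smul_eq_C_mul, natDegree_C_mul hc, Finset.mul_sum]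
  refine Finset.sum_congr rfl fun m _ => ?_
  rw [Polynomial.map_mul, map_C, iterate_derivative_C_mul, iterate_derivative_C_mul]
  simp only [eval_mul, eval_C]
  ring

lemma eq_zero_of_coeff_max_natDegree_eq_zero {P Q : ℂ[X]} {n : ℕ}
    (hn : max P.natDegree Q.natDegree = n) (hP : P.coeff n = 0) (hQ : Q.coeff n = 0) : P = 0 := by
  rcases max_choice P.natDegree Q.natDegree with h | h
  · rw [← hn, h] at hP
    exact leadingCoeff_eq_zero.1 hP
  · rw [← hn, h] at hQ
    rw [← hn, leadingCoeff_eq_zero.1 hQ, natDegree_zero, max_zero] at hP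
    exact leadingCoeff_eq_zero.1 hP

lemma exists_norm_eq_one_smul_eq_of_smul_eq {𝕜 M : Type*} [NormedField 𝕜] [AddCommGroup M]
    [Module 𝕜 M] {a b : 𝕜} {x y : M} (h : a • x = b • y) (hab : ‖a‖ = ‖b‖) (ha : a ≠ 0) :
    ∃ c : 𝕜, ‖c‖ = 1 ∧ x = c • y := by
  refine ⟨b / a, ?_, ?_⟩
  · rw [norm_div, ← hab, div_self (norm_ne_zero_iff.2 ha)]
  · rw [div_eq_inv_mul, ← smul_smul, ← h, smul_smul, inv_mul_cancel₀ ha, one_smul]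

theorem stmt9 (P Q : Polynomial ℂ) :
    (∀ z w : ℂ, ambPoly P z w = ambPoly Q z w) ↔
      ∃ c : ℂ, ‖c‖ = 1 ∧ P = c • Q := by
  constructor
  · intro h
    obtain ⟨n, hn⟩ : ∃ n, max P.natDegree Q.natDegree = n := ⟨_, rfl⟩
    have hsmul := conj_coeff_smul_eq_of_ambPoly_eq h (hn ▸ le_max_left _ _) (hn ▸ le_max_right _ _)
    have hnorm : ‖P.coeff n‖ = ‖Q.coeff n‖ := by
      have htop := congrArg (coeff · n) hsmul
      simp only [coeff_smul, smul_eq_mul, Complex.conj_mul'] at htop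
      exact (pow_left_inj₀ (norm_nonneg _) (norm_nonneg _) two_ne_zero).1 (by exact_mod_cast htop)
    by_cases hP : P.coeff n = 0
    · have hQ : Q.coeff n = 0 := norm_eq_zero.1 (hnorm ▸ norm_eq_zero.2 hP)
      refine ⟨1, norm_one, ?_⟩
      rw [eq_zero_of_coeff_max_natDegree_eq_zero hn hP hQ, one_smul,
        eq_zero_of_coeff_max_natDegree_eq_zero (max_comm P.natDegree _ ▸ hn) hQ hP]
    · exact exists_norm_eq_one_smul_eq_of_smul_eq hsmul (by simpa using hnorm) (by simpa using hP)
  · rintro ⟨c, hc, rfl⟩ z w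
    rw [ambPoly_smul, Complex.mul_conj', hc]
    simp
end

section
/- Let 𝒫, 𝒬 be monic polynomials of the same degree n over ℂ satisfying the algebraic ambiguity equation A_𝒫(z,w)·A_𝒫(-z,-w) = A_𝒬(z,w)·A_𝒬(-z,-w). Then 𝒫·𝒫ˇ = 𝒬·𝒬ˇ, where 𝒫ˇ(z) = (-1)^n 𝒫(-z). -/
open Polynomial

/-!
For fixed `z`, `w ↦ A_P(z, w)` is a polynomial of degree at most `n` whose `wⁿ`-coefficient is
`P(z)`: only the term `m = 0` reaches degree `n`, and there `P*` is monic. Hence the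
`w²ⁿ`-coefficient of `A_P(z, w) A_P(-z, -w)` is `(-1)ⁿ P(z) P(-z) = (P Pˇ)(z)`, and the ambiguity
equation forces these to agree for `P` and `Q`.
-/

theorem Polynomial.coeff_comp_neg_X {R : Type*} [CommRing R] (p : R[X]) (k : ℕ) :
    (p.comp (-X)).coeff k = (-1) ^ k * p.coeff k := by
  induction p using Polynomial.induction_on' with
  | add p q hp hq => simp [add_comp, hp, hq, mul_add]
  | monomial m a =>
    rw [← C_mul_X_pow_eq_monomial, mul_comp, C_comp, pow_comp, X_comp, neg_pow, ← C_1, ← C_neg,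
      ← C_pow, ← mul_assoc, ← C_mul, coeff_C_mul_X_pow, coeff_C_mul_X_pow]
    split_ifs with hkm
    · subst hkm; ring
    · simp

theorem eval_checkPoly (P : ℂ[X]) (z : ℂ) :
    (checkPoly P).eval z = (-1) ^ P.natDegree * P.eval (-z) := by
  simp [checkPoly]

noncomputable def ambSlice (P : ℂ[X]) (z : ℂ) : ℂ[X] :=
  ∑ m ∈ Finset.range (P.natDegree + 1),
    C ((1 / (Nat.factorial m : ℂ)) * ((derivative^[m] P).eval z)) *
      derivative^[m] (P.map (starRingEnd ℂ))

theorem eval_ambSlice (P : ℂ[X]) (z w : ℂ) : (ambSlice P z).eval w = ambPoly P z w := by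
  simp [ambSlice, ambPoly, eval_finsetSum]

theorem natDegree_iterate_derivative_map_conj_le (P : ℂ[X]) (m : ℕ) :
    (derivative^[m] (P.map (starRingEnd ℂ))).natDegree ≤ P.natDegree - m := by
  simpa [natDegree_map_eq_of_injective (starRingEnd ℂ).injective P] using
    natDegree_iterate_derivative (P.map (starRingEnd ℂ)) m

theorem natDegree_ambSlice_le (P : ℂ[X]) (z : ℂ) : (ambSlice P z).natDegree ≤ P.natDegree :=
  natDegree_sum_le_of_forall_le _ _ fun m _ =>
    (natDegree_C_mul_le _ _).trans <|
      (natDegree_iterate_derivative_map_conj_le P m).trans (Nat.sub_le _ _)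

theorem coeff_ambSlice_natDegree (P : ℂ[X]) (z : ℂ) :
    (ambSlice P z).coeff P.natDegree = P.eval z * starRingEnd ℂ P.leadingCoeff := by
  rw [ambSlice, finsetSum_coeff, Finset.sum_eq_single 0]
  · simp [coeff_map, coeff_natDegree]
  · intro m hm hm0
    have hlt : (derivative^[m] (P.map (starRingEnd ℂ))).natDegree < P.natDegree := by
      have := natDegree_iterate_derivative_map_conj_le P m
      have := Finset.mem_range.1 hm
      omega
    rw [coeff_C_mul, coeff_eq_zero_of_natDegree_lt hlt, mul_zero]
  · simp

theorem coeff_ambSlice_mul_ambSlice_neg (P : ℂ[X]) (z : ℂ) :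
    (ambSlice P z * (ambSlice P (-z)).comp (-X)).coeff (P.natDegree + P.natDegree) =
      (P * checkPoly P).eval z * starRingEnd ℂ P.leadingCoeff ^ 2 := by
  have hcomp : ((ambSlice P (-z)).comp (-X)).natDegree ≤ P.natDegree := by
    simpa using (natDegree_comp_le (p := ambSlice P (-z)) (q := -X)).trans
      (by simpa using natDegree_ambSlice_le P (-z))
  rw [coeff_mul_add_eq_of_natDegree_le (natDegree_ambSlice_le P z) hcomp, coeff_comp_neg_X,
    coeff_ambSlice_natDegree, coeff_ambSlice_natDegree, eval_mul, eval_checkPoly]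
  ring

theorem stmt10 (n : ℕ) (P Q : Polynomial ℂ)
    (hP : P.Monic) (hQ : Q.Monic)
    (hPn : P.natDegree = n) (hQn : Q.natDegree = n)
    (h : ∀ z w : ℂ, ambPoly P z w * ambPoly P (-z) (-w)
        = ambPoly Q z w * ambPoly Q (-z) (-w)) :
    P * checkPoly P = Q * checkPoly Q := by
  refine Polynomial.funext fun z => ?_
  have hslice : ambSlice P z * (ambSlice P (-z)).comp (-X) =
      ambSlice Q z * (ambSlice Q (-z)).comp (-X) :=
    Polynomial.funext fun w => by simpa [eval_ambSlice] using h z w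
  have hcoeff := congrArg (coeff · (n + n)) hslice
  rwa [← hPn, coeff_ambSlice_mul_ambSlice_neg, hPn, ← hQn, coeff_ambSlice_mul_ambSlice_neg,
    hP.leadingCoeff, hQ.leadingCoeff, map_one, one_pow, mul_one, mul_one] at hcoeff
end

section
/- Let 𝒫 be a monic polynomial of degree n over ℂ with coefficient of Z^{n-1} equal to 0 (p₁ = 0), and suppose 𝒬 is a monic polynomial of degree n satisfying A_𝒫(z,w)A_𝒫(-z,-w) = A_𝒬(z,w)A_𝒬(-z,-w). Then 𝒬 = 𝒫 or 𝒬 = 𝒫ˇ. -/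
open Polynomial

/-!
Expand `A_𝒫(z, w) A_𝒫(-z, -w)` in powers of `w`, with coefficients polynomials in `z`. The
coefficient of `w^{2n}` gives `𝒬(z)𝒬(-z) = 𝒫(z)𝒫(-z)`. Comparing the coefficients of
`w^{2n-2}` (where `p₁ = 0` is used) and reading off their two top coefficients in `z` gives
`|q₁|² = 0`; with `q₁ = 0` the same comparison yields `𝒬'(z)𝒬'(-z) = 𝒫'(z)𝒫'(-z)`.

By a gcd argument, the first identity gives `𝒫 = RS` and `𝒬 = c R(z) S(-z)`. Then the
second one reads `W(R, R(-z)) W(S, S(-z)) = 0`, where `W` is the Wronskian. So `R` or `S` is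
proportional to its reflection, and `𝒬` is a multiple of `𝒫` or of `𝒫(-z)`. Monicity fixes
the constant.
-/

open Finset.HasAntidiagonal (antidiagonal mem_antidiagonal)

namespace Polynomial

section CommRing

variable {R : Type*} [CommRing R]

theorem coeff_comp_neg_X_s11 (p : R[X]) (k : ℕ) :
    (p.comp (-X)).coeff k = (-1) ^ k * p.coeff k := by
  rw [← neg_one_mul (X : R[X]), ← C_1, ← C_neg, comp_C_mul_X_coeff, mul_comm]

theorem derivative_comp_neg_X (p : R[X]) :
    derivative (p.comp (-X)) = -(derivative p).comp (-X) := by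
  simp [derivative_comp]

theorem natDegree_comp_neg_X (p : R[X]) : (p.comp (-X)).natDegree = p.natDegree :=
  natDegree_eq_of_degree_eq degree_comp_neg_X

theorem derivative_mul_comp_neg_X_sub_eq_wronskian_mul (a b : R[X]) :
    derivative (a * b) * (derivative (a * b)).comp (-X)
      - derivative (a * b.comp (-X)) * (derivative (a * b.comp (-X))).comp (-X)
      = wronskian a (a.comp (-X)) * wronskian b (b.comp (-X)) := by
  simp only [wronskian, derivative_mul, derivative_comp_neg_X, mul_comp_neg_X, add_comp,
    neg_comp, comp_neg_X_comp_neg_X]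
  ring

theorem eq_of_monic_of_eq_C_mul [NoZeroDivisors R] {p q : R[X]} {a : R} (hp : p.Monic)
    (hq : q.Monic) (h : p = C a * q) : p = q := by
  have ha : 1 = a := by simpa [hp.leadingCoeff, hq.leadingCoeff] using congrArg leadingCoeff h
  rw [h, ← ha, C_1, one_mul]

theorem coeff_mul_add_add_one_of_natDegree_le {a b : ℕ} {f g : R[X]} (hf : f.natDegree ≤ a + 1)
    (hg : g.natDegree ≤ b + 1) :
    (f * g).coeff (a + b + 1) = f.coeff (a + 1) * g.coeff b + f.coeff a * g.coeff (b + 1) := by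
  rw [coeff_mul, Finset.sum_eq_add_of_mem (a + 1, b) (a, b + 1)
    (by rw [mem_antidiagonal]; omega) (by rw [mem_antidiagonal]; omega)
    (by simp)]
  rintro ⟨i, j⟩ hij hne
  rw [mem_antidiagonal] at hij
  simp only [ne_eq, Prod.mk.injEq] at hne
  rcases le_or_gt i (a + 1) with hi | hi
  · rw [coeff_eq_zero_of_natDegree_lt (show g.natDegree < j by omega), mul_zero]
  · rw [coeff_eq_zero_of_natDegree_lt (show f.natDegree < i by omega), zero_mul]

theorem natDegree_derivative_mul_comp_neg_X_add_lt {p : R[X]} {m : ℕ}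
    (hn : p.natDegree ≤ m + 2) :
    (derivative p * p.comp (-X) + p * (derivative p).comp (-X)).natDegree < 2 * m + 4 := by
  have hd := natDegree_derivative_le p
  refine (natDegree_add_le _ _).trans_lt (max_lt ?_ ?_) <;>
    refine natDegree_mul_le.trans_lt ?_ <;> rw [natDegree_comp_neg_X] <;> omega

theorem natDegree_derivative_mul_derivative_comp_neg_X_lt {p : R[X]} {m : ℕ}
    (hn : p.natDegree ≤ m + 2) :
    (derivative p * (derivative p).comp (-X)).natDegree < 2 * m + 4 := by
  have hd := natDegree_derivative_le p
  refine natDegree_mul_le.trans_lt ?_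
  rw [natDegree_comp_neg_X]
  omega

section Monic

variable {p : R[X]} {m : ℕ}

theorem Monic.coeff_mul_comp_neg_X_self (hp : p.Monic) (hn : p.natDegree = m + 2) :
    (p * p.comp (-X)).coeff (2 * m + 4) = (-1) ^ m := by
  have hlead : p.coeff (m + 2) = 1 := hn ▸ hp.coeff_natDegree
  rw [show 2 * m + 4 = (m + 2) + (m + 2) by omega,
    coeff_mul_add_eq_of_natDegree_le hn.le ((natDegree_comp_neg_X p).trans hn).le,
    coeff_comp_neg_X_s11, hlead]
  ring

theorem Monic.coeff_derivative_mul_comp_neg_X_add (hp : p.Monic) (hn : p.natDegree = m + 2) :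
    (derivative p * p.comp (-X) + p * (derivative p).comp (-X)).coeff (2 * m + 2)
      = -2 * (-1) ^ m * p.coeff (m + 1) := by
  have hlead : p.coeff (m + 2) = 1 := hn ▸ hp.coeff_natDegree
  have hd : (derivative p).natDegree ≤ m + 1 := (natDegree_derivative_le p).trans (by omega)
  rw [coeff_add, show 2 * m + 2 = m + (m + 1) + 1 by omega,
    coeff_mul_add_add_one_of_natDegree_le hd ((natDegree_comp_neg_X p).trans hn).le,
    show m + (m + 1) + 1 = m + 1 + m + 1 by omega,
    coeff_mul_add_add_one_of_natDegree_le hn.le ((natDegree_comp_neg_X _).trans_le hd)]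
  simp only [coeff_comp_neg_X_s11, coeff_derivative, hlead, pow_succ]
  push_cast
  ring

theorem Monic.coeff_derivative_mul_derivative_comp_neg_X (hp : p.Monic)
    (hn : p.natDegree = m + 2) :
    (derivative p * (derivative p).comp (-X)).coeff (2 * m + 2)
      = -(-1) ^ m * ((m : R) + 2) ^ 2 := by
  have hlead : p.coeff (m + 2) = 1 := hn ▸ hp.coeff_natDegree
  have hd : (derivative p).natDegree ≤ m + 1 := (natDegree_derivative_le p).trans (by omega)
  rw [show 2 * m + 2 = (m + 1) + (m + 1) by omega,
    coeff_mul_add_eq_of_natDegree_le hd ((natDegree_comp_neg_X _).trans_le hd)]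
  simp only [coeff_comp_neg_X_s11, coeff_derivative, hlead, pow_succ]
  push_cast
  ring

end Monic

end CommRing

section Field

variable {K : Type*} [Field K]

theorem exists_eq_C_mul_of_wronskian_eq_zero [CharZero K] {a b : K[X]} (ha : a ≠ 0)
    (h : wronskian a b = 0) : ∃ k, b = C k * a := by
  classical
  obtain ⟨a', b', ha', hb', hunit⟩ := extract_gcd a b
  set g := gcd a b
  have hg : g ≠ 0 := fun h0 => ha (by rw [ha', h0, zero_mul])
  have hw : wronskian a' b' = 0 := by
    have : g ^ 2 * wronskian a' b' = 0 := by
      rw [← h, ha', hb']; simp only [wronskian, derivative_mul]; ring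
    simpa [hg] using this
  obtain ⟨hda, hdb⟩ := ((gcd_isUnit_iff a' b').1 hunit).wronskian_eq_zero_iff.1 hw
  rw [eq_C_of_derivative_eq_zero hda] at ha'
  rw [eq_C_of_derivative_eq_zero hdb] at hb'
  have ha0 : a'.coeff 0 ≠ 0 := fun h0 => ha (by rw [ha', h0, C_0, mul_zero])
  refine ⟨b'.coeff 0 / a'.coeff 0, ?_⟩
  rw [ha', hb', mul_left_comm, ← C_mul, div_mul_cancel₀ _ ha0]

theorem exists_eq_mul_mul_comp_neg_X_of_mul_comp_neg_X_eq {P Q : K[X]} (hP : P ≠ 0)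
    (h : Q * Q.comp (-X) = P * P.comp (-X)) :
    ∃ R S : K[X], ∃ c : K, P = R * S ∧ Q = C c * (R * S.comp (-X)) := by
  classical
  obtain ⟨P₁, Q₁, hP₁, hQ₁, hunit⟩ := extract_gcd P Q
  set g := gcd P Q
  have hg : g * g.comp (-X) ≠ 0 :=
    mul_ne_zero (fun h0 => hP (by rw [hP₁, h0, zero_mul]))
      (fun h0 => hP (by rw [hP₁, comp_neg_X_eq_zero_iff.1 h0, zero_mul]))
  have hcop : IsCoprime P₁ Q₁ := (gcd_isUnit_iff P₁ Q₁).1 hunit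
  have h₁ : Q₁ * Q₁.comp (-X) = P₁ * P₁.comp (-X) := by
    refine mul_left_cancel₀ hg ?_
    rw [hP₁, hQ₁, mul_comp_neg_X, mul_comp_neg_X] at h
    linear_combination h
  have hQ₁P₁ : Q₁ ∣ P₁.comp (-X) :=
    hcop.symm.dvd_of_dvd_mul_left (h₁ ▸ dvd_mul_right Q₁ _)
  have hP₁Q₁ : P₁.comp (-X) ∣ Q₁ :=
    (dvd_comp_neg_X_iff _ _).1 (hcop.dvd_of_dvd_mul_left (h₁ ▸ dvd_mul_right P₁ _))
  obtain ⟨u, hu⟩ := associated_of_dvd_dvd hP₁Q₁ hQ₁P₁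
  obtain ⟨c, -, hc⟩ := Polynomial.isUnit_iff.1 u.isUnit
  exact ⟨g, P₁, c, hP₁, by rw [hQ₁, ← hu, ← hc]; ring⟩

theorem exists_eq_C_mul_of_mul_comp_neg_X_eq [CharZero K] {P Q : K[X]} (hP : P ≠ 0)
    (h₀ : Q * Q.comp (-X) = P * P.comp (-X))
    (h₁ : derivative Q * (derivative Q).comp (-X) = derivative P * (derivative P).comp (-X)) :
    ∃ a : K, Q = C a * P ∨ Q = C a * P.comp (-X) := by
  obtain ⟨R, S, c, rfl, rfl⟩ := exists_eq_mul_mul_comp_neg_X_of_mul_comp_neg_X_eq hP h₀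
  have hc : C (c ^ 2) = (1 : K[X]) := by
    refine mul_right_cancel₀ (mul_ne_zero hP (comp_neg_X_eq_zero_iff.not.2 hP)) ?_
    simp only [mul_comp_neg_X, C_comp, comp_neg_X_comp_neg_X, C_pow] at h₀ ⊢
    linear_combination h₀
  have hW : wronskian R (R.comp (-X)) * wronskian S (S.comp (-X)) = 0 := by
    rw [← derivative_mul_comp_neg_X_sub_eq_wronskian_mul]
    set U := R * S.comp (-X)
    rw [derivative_C_mul, mul_comp_neg_X, C_comp] at h₁
    rw [C_pow] at hc
    linear_combination -h₁ + (derivative U * (derivative U).comp (-X)) * hc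
  rcases mul_eq_zero.1 hW with hR | hS
  · have hR0 : R.comp (-X) ≠ 0 := comp_neg_X_eq_zero_iff.not.2 (left_ne_zero_of_mul hP)
    obtain ⟨k, hk⟩ :=
      exists_eq_C_mul_of_wronskian_eq_zero hR0 (by rw [← wronskian_neg_eq, hR, neg_zero])
    exact ⟨c * k, Or.inr (by
      rw [mul_comp_neg_X, C_mul]; linear_combination (C c * S.comp (-X)) * hk)⟩
  · obtain ⟨k, hk⟩ := exists_eq_C_mul_of_wronskian_eq_zero (right_ne_zero_of_mul hP) hS
    exact ⟨c * k, Or.inl (by rw [hk, C_mul]; ring)⟩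

end Field

end Polynomial

/- `ambPolyAt P z` is `w ↦ A_𝒫(z, w)`, `ambCoeff P k` is its coefficient of `w ^ k` as a
polynomial in `z`, and `ambProdCoeff P N` is the coefficient of `w ^ N` in
`A_𝒫(z, w) A_𝒫(-z, -w)`. -/
noncomputable def ambPolyAt (P : ℂ[X]) (z : ℂ) : ℂ[X] :=
  ∑ m ∈ Finset.range (P.natDegree + 1),
    C ((derivative^[m] P).eval z / m.factorial) * derivative^[m] (P.map (starRingEnd ℂ))

noncomputable def ambCoeff (P : ℂ[X]) (k : ℕ) : ℂ[X] :=
  ∑ m ∈ Finset.range (P.natDegree + 1 - k),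
    C ((k + m).choose m * starRingEnd ℂ (P.coeff (k + m))) * derivative^[m] P

noncomputable def ambProdCoeff (P : ℂ[X]) (N : ℕ) : ℂ[X] :=
  ∑ kl ∈ antidiagonal N, C ((-1) ^ kl.2) * (ambCoeff P kl.1 * (ambCoeff P kl.2).comp (-X))

theorem eval_ambPolyAt (P : ℂ[X]) (z w : ℂ) : (ambPolyAt P z).eval w = ambPoly P z w := by
  simp only [ambPolyAt, ambPoly, eval_finsetSum, eval_mul, eval_C]
  exact Finset.sum_congr rfl fun m _ => by ring

theorem coeff_ambPolyAt (P : ℂ[X]) (z : ℂ) (k : ℕ) :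
    (ambPolyAt P z).coeff k = (ambCoeff P k).eval z := by
  simp only [ambPolyAt, ambCoeff, finsetSum_coeff, coeff_C_mul, eval_finsetSum, eval_mul,
    eval_C, coeff_iterate_derivative, coeff_map, nsmul_eq_mul]
  rw [← Finset.sum_subset (Finset.range_subset_range.2 (Nat.sub_le _ k))]
  · refine Finset.sum_congr rfl fun m _ => ?_
    rw [Nat.descFactorial_eq_factorial_mul_choose]
    have : (m.factorial : ℂ) ≠ 0 := Nat.cast_ne_zero.2 m.factorial_ne_zero
    push_cast
    field_simp
  · intro m hm hmk
    rw [coeff_eq_zero_of_natDegree_lt (by simp at hm hmk; omega)]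
    simp

theorem ambProdCoeff_eq_of_ambPoly_mul_eq {P Q : ℂ[X]}
    (h : ∀ z w : ℂ, ambPoly P z w * ambPoly P (-z) (-w) = ambPoly Q z w * ambPoly Q (-z) (-w))
    (N : ℕ) : ambProdCoeff P N = ambProdCoeff Q N := by
  have eval_eq : ∀ (R : ℂ[X]) (z : ℂ),
      (ambProdCoeff R N).eval z = (ambPolyAt R z * (ambPolyAt R (-z)).comp (-X)).coeff N := by
    intro R z
    simp only [ambProdCoeff, coeff_mul, eval_finsetSum, eval_mul, eval_C, eval_comp, eval_neg,
      eval_X, coeff_comp_neg_X_s11, coeff_ambPolyAt]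
    exact Finset.sum_congr rfl fun kl _ => by ring
  refine Polynomial.funext fun z => ?_
  rw [eval_eq, eval_eq]
  congr 1
  refine Polynomial.funext fun w => ?_
  simp only [eval_mul, eval_comp, eval_neg, eval_X, eval_ambPolyAt]
  exact h z w

theorem ambCoeff_eq_zero_of_natDegree_lt {P : ℂ[X]} {k : ℕ} (hk : P.natDegree < k) :
    ambCoeff P k = 0 := by
  simp [ambCoeff, Nat.sub_eq_zero_of_le hk]

namespace Polynomial.Monic

variable {P : ℂ[X]} {m : ℕ}

theorem ambCoeff_natDegree (hP : P.Monic) : ambCoeff P P.natDegree = P := by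
  simp [ambCoeff, hP.coeff_natDegree]

theorem ambCoeff_add_one (hP : P.Monic) (hn : P.natDegree = m + 2) :
    ambCoeff P (m + 1) =
      C (starRingEnd ℂ (P.coeff (m + 1))) * P + C ((m : ℂ) + 2) * derivative P := by
  have hlead : P.coeff (m + 2) = 1 := hn ▸ hP.coeff_natDegree
  simp [ambCoeff, hn, Finset.sum_range_succ, show m + 2 + 1 - (m + 1) = 2 by omega, hlead,
    add_assoc, one_add_one_eq_two, C_ofNat]

theorem ambCoeff_self (hP : P.Monic) (hn : P.natDegree = m + 2) :
    ambCoeff P m = C (starRingEnd ℂ (P.coeff m)) * P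
      + C ((m + 1 : ℕ) * starRingEnd ℂ (P.coeff (m + 1))) * derivative P
      + C ((m + 2).choose 2 : ℂ) * derivative (derivative P) := by
  have hlead : P.coeff (m + 2) = 1 := hn ▸ hP.coeff_natDegree
  simp [ambCoeff, hn, Finset.sum_range_succ, show m + 2 + 1 - m = 3 by omega, hlead]

theorem ambProdCoeff_two_mul {n : ℕ} (hP : P.Monic) (hn : P.natDegree = n) :
    ambProdCoeff P (2 * n) = C ((-1) ^ n) * (P * P.comp (-X)) := by
  subst hn
  rw [ambProdCoeff, Finset.sum_eq_single (P.natDegree, P.natDegree)]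
  · rw [hP.ambCoeff_natDegree]
  · rintro ⟨k, l⟩ hkl hne
    rw [mem_antidiagonal] at hkl
    rcases lt_or_gt_of_ne (show k ≠ P.natDegree by rintro rfl; exact hne (by congr; omega))
      with hk | hk
    · rw [ambCoeff_eq_zero_of_natDegree_lt (show P.natDegree < l by omega), zero_comp,
        mul_zero, mul_zero]
    · rw [ambCoeff_eq_zero_of_natDegree_lt hk, zero_mul, mul_zero]
  · simp [two_mul]

theorem ambProdCoeff_two_mul_add_two_eq_ambCoeff (hP : P.Monic) (hn : P.natDegree = m + 2) :
    ambProdCoeff P (2 * m + 2) = C ((-1) ^ m) *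
      (ambCoeff P m * P.comp (-X) - ambCoeff P (m + 1) * (ambCoeff P (m + 1)).comp (-X)
        + P * (ambCoeff P m).comp (-X)) := by
  have hsub : {(m, m + 2), (m + 1, m + 1), (m + 2, m)} ⊆ antidiagonal (2 * m + 2) := by
    intro kl hkl
    simp only [Finset.mem_insert, Finset.mem_singleton] at hkl
    rw [mem_antidiagonal]
    rcases hkl with rfl | rfl | rfl <;> omega
  rw [ambProdCoeff, ← Finset.sum_subset hsub]
  · rw [Finset.sum_insert (by simp), Finset.sum_insert (by simp), Finset.sum_singleton,
      ← hn, hP.ambCoeff_natDegree, hn]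
    simp only [pow_succ, C_mul, C_neg, C_1]
    ring
  · rintro ⟨k, l⟩ hkl hne
    rw [mem_antidiagonal] at hkl
    simp only [Finset.mem_insert, Finset.mem_singleton, Prod.mk.injEq, not_or] at hne
    rcases le_or_gt k (m + 2) with hk | hk
    · rw [ambCoeff_eq_zero_of_natDegree_lt (show P.natDegree < l by omega), zero_comp,
        mul_zero, mul_zero]
    · rw [ambCoeff_eq_zero_of_natDegree_lt (show P.natDegree < k by omega), zero_mul, mul_zero]

theorem ambProdCoeff_two_mul_add_two (hP : P.Monic) (hn : P.natDegree = m + 2) :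
    ambProdCoeff P (2 * m + 2) = C ((-1) ^ m) *
      (C (2 * starRingEnd ℂ (P.coeff m) - starRingEnd ℂ (P.coeff (m + 1)) ^ 2)
          * (P * P.comp (-X))
        - C (starRingEnd ℂ (P.coeff (m + 1))) *
            (derivative P * P.comp (-X) + P * (derivative P).comp (-X))
        + C ((m + 2).choose 2 : ℂ) * derivative (derivative (P * P.comp (-X)))
        - C ((m : ℂ) + 2) * (derivative P * (derivative P).comp (-X))) := by
  have hγ : ((m + 2).choose 2 : ℂ) * 2 = (m + 2) * (m + 1) := by
    rw [Nat.cast_choose_two]; push_cast; ring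
  have hγ' := congrArg C hγ
  rw [hP.ambProdCoeff_two_mul_add_two_eq_ambCoeff hn, hP.ambCoeff_self hn, hP.ambCoeff_add_one hn]
  simp only [derivative_mul, derivative_comp_neg_X, derivative_add, derivative_neg, add_comp,
    mul_comp_neg_X, C_comp]
  simp only [map_mul, map_add, map_ofNat, map_natCast, map_sub, map_pow, map_neg, map_one,
    Nat.cast_add, Nat.cast_one] at hγ' ⊢
  linear_combination ((-1) ^ m * (derivative P * (derivative P).comp (-X))) * hγ'

theorem derivative_mul_comp_neg_X_eq_of_ambProdCoeff_eq {Q : ℂ[X]}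
    (hP : P.Monic) (hQ : Q.Monic) (hPn : P.natDegree = m + 2) (hQn : Q.natDegree = m + 2)
    (hp₁ : P.coeff (m + 1) = 0) (h₀ : Q * Q.comp (-X) = P * P.comp (-X))
    (h₂ : ambProdCoeff Q (2 * m + 2) = ambProdCoeff P (2 * m + 2)) :
    derivative Q * (derivative Q).comp (-X) = derivative P * (derivative P).comp (-X) := by
  set α := starRingEnd ℂ (Q.coeff (m + 1))
  set δ := 2 * starRingEnd ℂ (Q.coeff m) - α ^ 2 - 2 * starRingEnd ℂ (P.coeff m)
  set D := derivative Q * (derivative Q).comp (-X) - derivative P * (derivative P).comp (-X)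
  have hmain : C δ * (P * P.comp (-X))
      - C α * (derivative Q * Q.comp (-X) + Q * (derivative Q).comp (-X))
      - C ((m : ℂ) + 2) * D = 0 := by
    rw [hQ.ambProdCoeff_two_mul_add_two hQn, hP.ambProdCoeff_two_mul_add_two hPn, hp₁, h₀]
      at h₂
    have h₃ := mul_left_cancel₀ (C_ne_zero.2 (pow_ne_zero m (neg_ne_zero.2 one_ne_zero))) h₂
    simp only [D, δ, map_sub, map_mul, map_pow, map_ofNat, map_zero] at h₃ ⊢
    linear_combination h₃
  -- The `z ^ (2m+4)` coefficient of `hmain` gives `δ = 0`; then its `z ^ (2m+2)` coefficient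
  -- is a multiple of `conj q₁ * q₁`.
  have hδ : δ = 0 := by
    have := congrArg (coeff · (2 * m + 4)) hmain
    simp only [coeff_sub, coeff_C_mul, hP.coeff_mul_comp_neg_X_self hPn, coeff_zero, D,
      coeff_eq_zero_of_natDegree_lt (natDegree_derivative_mul_comp_neg_X_add_lt hQn.le),
      coeff_eq_zero_of_natDegree_lt (natDegree_derivative_mul_derivative_comp_neg_X_lt hQn.le),
      coeff_eq_zero_of_natDegree_lt (natDegree_derivative_mul_derivative_comp_neg_X_lt hPn.le),
      mul_zero, sub_zero] at this
    simpa using this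
  have hα : α = 0 := by
    have := congrArg (coeff · (2 * m + 2)) hmain
    simp only [coeff_sub, coeff_C_mul, coeff_zero, hδ, zero_mul, zero_sub, D,
      hQ.coeff_derivative_mul_comp_neg_X_add hQn, hQ.coeff_derivative_mul_derivative_comp_neg_X hQn,
      hP.coeff_derivative_mul_derivative_comp_neg_X hPn, sub_self, mul_zero, sub_zero] at this
    have hαq : α * Q.coeff (m + 1) = 0 := by simpa using this
    rcases mul_eq_zero.1 hαq with h | h
    · exact h
    · simp [α, h]
  rw [hδ, hα, C_0, zero_mul, zero_mul, sub_zero, zero_sub, neg_eq_zero] at hmain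
  exact sub_eq_zero.1 ((mul_eq_zero.1 hmain).resolve_left (C_ne_zero.2 (by norm_cast)))

end Polynomial.Monic

theorem comp_neg_X_eq_C_mul_checkPoly (P : ℂ[X]) :
    P.comp (-X) = C ((-1) ^ P.natDegree) * checkPoly P := by
  rw [checkPoly, smul_eq_C_mul, ← mul_assoc, ← C_mul, ← mul_pow]
  simp

theorem monic_checkPoly {P : ℂ[X]} (hP : P.Monic) : (checkPoly P).Monic := by
  simpa [checkPoly, smul_eq_C_mul] using hP.neg_one_pow_natDegree_mul_comp_neg_X

theorem stmt11 (n : ℕ) (P Q : Polynomial ℂ)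
    (hP : P.Monic) (hQ : Q.Monic)
    (hPn : P.natDegree = n) (hQn : Q.natDegree = n) (hp1 : P.coeff (n - 1) = 0)
    (h : ∀ z w : ℂ, ambPoly P z w * ambPoly P (-z) (-w)
        = ambPoly Q z w * ambPoly Q (-z) (-w)) :
    Q = P ∨ Q = checkPoly P := by
  have hprod : Q * Q.comp (-X) = P * P.comp (-X) := by
    have h₂ := ambProdCoeff_eq_of_ambPoly_mul_eq h (2 * n)
    rw [hP.ambProdCoeff_two_mul hPn, hQ.ambProdCoeff_two_mul hQn] at h₂
    exact (mul_left_cancel₀ (C_ne_zero.2 (pow_ne_zero n (neg_ne_zero.2 one_ne_zero))) h₂).symm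
  have hprod' :
      derivative Q * (derivative Q).comp (-X) = derivative P * (derivative P).comp (-X) := by
    rcases n with _ | _ | m
    · rw [derivative_of_natDegree_zero hPn, derivative_of_natDegree_zero hQn]
    · rw [hP.eq_X_add_C hPn, hQ.eq_X_add_C hQn]
      simp
    · exact hP.derivative_mul_comp_neg_X_eq_of_ambProdCoeff_eq hQ hPn hQn hp1 hprod
        (ambProdCoeff_eq_of_ambPoly_mul_eq h _).symm
  obtain ⟨a, ha | ha⟩ := exists_eq_C_mul_of_mul_comp_neg_X_eq hP.ne_zero hprod hprod'
  · exact Or.inl (eq_of_monic_of_eq_C_mul hQ hP ha)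
  · refine Or.inr (eq_of_monic_of_eq_C_mul (a := a * (-1) ^ P.natDegree) hQ
      (monic_checkPoly hP) ?_)
    rw [ha, comp_neg_X_eq_C_mul_checkPoly, ← mul_assoc, ← C_mul]
end

section
/- Two finite complex sequences a, b ∈ ℂ^{N+1} are discrete ambiguity partners (i.e., |𝒜(a)(k,t)| = |𝒜(b)(k,t)| for all k ∈ ℤ, t ∈ ℝ) if and only if K_a* K_a = K_b* K_b, where K_a is the ambiguity matrix of a. -/
noncomputable def ambMatrix (d : ℤ → ℂ) (j k : ℤ) : ℂ :=
  if (j + k) % 2 = 0 then d ((j + k) / 2) * d ((j - k) / 2) else 0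

open Complex Finset ComplexConjugate

theorem Polynomial.eq_zero_of_forall_eval_exp_I_mul_eq_zero {p : Polynomial ℂ}
    (h : ∀ t : ℝ, p.eval (exp (I * t)) = 0) : p = 0 := by
  have hinj : Set.InjOn (fun t : ℝ => exp (I * t)) (Set.Ioc (-Real.pi) Real.pi) := by
    intro s hs t ht hst
    have him : ∀ r : ℝ, (I * r).im = r := by simp
    exact ofReal_injective <| mul_left_cancel₀ I_ne_zero <| exp_inj_of_neg_pi_lt_of_le_pi
      (by rw [him]; exact hs.1) (by rw [him]; exact hs.2)
      (by rw [him]; exact ht.1) (by rw [him]; exact ht.2) hst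
  refine p.eq_zero_of_infinite_isRoot ((Set.Ioc_infinite ?_).image hinj |>.mono ?_)
  · linarith [Real.pi_pos]
  · rintro _ ⟨t, -, rfl⟩
    exact h t

theorem eq_zero_of_forall_sum_mul_exp_eq_zero {N : ℕ} {c : ℤ → ℂ}
    (h : ∀ t : ℝ, ∑ m ∈ Icc (-N : ℤ) N, c m * exp (I * m * t) = 0) {m : ℤ}
    (hm : m ∈ Icc (-N : ℤ) N) : c m = 0 := by
  set p : Polynomial ℂ := ∑ n ∈ Icc (-N : ℤ) N, .C (c n) * .X ^ (n + N).toNat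
  -- shifting exponents by `N`: `p (exp (I t)) = exp (I N t) * ∑ n, c n * exp (I n t)`
  have hp : p = 0 := by
    refine Polynomial.eq_zero_of_forall_eval_exp_I_mul_eq_zero fun t => ?_
    have hpow : ∀ n ∈ Icc (-N : ℤ) N,
        exp (I * t) ^ (n + N).toNat = exp (I * N * t) * exp (I * n * t) := by
      intro n hn
      rw [mem_Icc] at hn
      rw [← zpow_natCast, Int.toNat_of_nonneg (by omega), ← exp_int_mul, ← exp_add]
      push_cast
      ring_nf
    simp only [p, Polynomial.eval_finsetSum, Polynomial.eval_mul, Polynomial.eval_C,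
      Polynomial.eval_pow, Polynomial.eval_X]
    rw [sum_congr rfl fun n hn => by rw [hpow n hn], ← mul_zero (exp (I * N * t)), ← h t,
      mul_sum]
    exact sum_congr rfl fun n _ => by ring
  have hcoeff := congrArg (Polynomial.coeff · (m + N).toNat) hp
  simp only [p, Polynomial.finsetSum_coeff, Polynomial.coeff_C_mul_X_pow,
    Polynomial.coeff_zero] at hcoeff
  rwa [sum_eq_single_of_mem m hm fun n hn hnm => if_neg ?_, if_pos rfl] at hcoeff
  simp only [mem_Icc] at hm hn
  omega

theorem eq_of_forall_sum_mul_exp_eq {N : ℕ} {c d : ℤ → ℂ}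
    (h : ∀ t : ℝ, ∑ m ∈ Icc (-N : ℤ) N, c m * exp (I * m * t) =
      ∑ m ∈ Icc (-N : ℤ) N, d m * exp (I * m * t)) {m : ℤ}
    (hm : m ∈ Icc (-N : ℤ) N) : c m = d m :=
  sub_eq_zero.mp <| eq_zero_of_forall_sum_mul_exp_eq_zero (c := c - d)
    (fun t => by simp only [Pi.sub_apply, sub_mul, sum_sub_distrib, h t, sub_self]) hm

noncomputable def autocorr (N : ℕ) (x : ℤ → ℂ) (m : ℤ) : ℂ :=
  ∑ j ∈ Icc (0 : ℤ) N, x j * conj (x (j - m))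

theorem sum_mul_exp_mul_conj_eq_sum_autocorr {N : ℕ} {x : ℤ → ℂ}
    (hx : Function.support x ⊆ Set.Icc 0 (N : ℤ)) (t : ℝ) :
    (∑ j ∈ Icc (0 : ℤ) N, x j * exp (I * j * t)) * conj (∑ j ∈ Icc (0 : ℤ) N, x j * exp (I * j * t))
      = ∑ m ∈ Icc (-N : ℤ) N, autocorr N x m * exp (I * m * t) := by
  rw [map_sum, sum_mul_sum]
  simp only [autocorr, sum_mul]
  conv_rhs => rw [sum_comm]
  refine sum_congr rfl fun j hj => ?_
  rw [mem_Icc] at hj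
  refine sum_bij_ne_zero (fun j' _ _ => j - j') (fun j' hj' _ => ?_) (fun _ _ _ _ _ _ => by omega)
    (fun m _ hne => ?_) (fun j' _ _ => ?_)
  · rw [mem_Icc] at hj' ⊢
    omega
  · have hxm : x (j - m) ≠ 0 := fun h0 => hne (by rw [h0, map_zero, mul_zero, zero_mul])
    refine ⟨j - m, mem_Icc.mpr (hx hxm), ?_, by omega⟩
    have hxj : x j ≠ 0 := left_ne_zero_of_mul (left_ne_zero_of_mul hne)
    exact mul_ne_zero (mul_ne_zero hxj (exp_ne_zero _))
      ((map_ne_zero _).mpr (mul_ne_zero hxm (exp_ne_zero _)))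
  · have hexp : I * ↑(j - j') * ↑t = I * j * t + conj (I * j' * t) := by
      simp only [map_mul, conj_I, conj_ofReal, map_intCast]
      push_cast
      ring
    rw [sub_sub_cancel, map_mul, ← exp_conj, hexp, exp_add]
    ring

theorem autocorr_eq_zero_of_notMem {N : ℕ} {x : ℤ → ℂ}
    (hx : Function.support x ⊆ Set.Icc 0 (N : ℤ)) {m : ℤ} (hm : m ∉ Icc (-N : ℤ) N) :
    autocorr N x m = 0 := by
  refine sum_eq_zero fun j hj => ?_
  have hxm : x (j - m) = 0 := by
    by_contra hne
    have := hx hne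
    simp only [Set.mem_Icc, mem_Icc] at this hj hm
    omega
  rw [hxm, map_zero, mul_zero]

def ambProd (a : ℤ → ℂ) (k : ℤ) (j : ℤ) : ℂ :=
  a j * conj (a (j - k))

theorem support_ambProd_subset (a : ℤ → ℂ) (k : ℤ) :
    Function.support (ambProd a k) ⊆ Function.support a :=
  Function.support_mul_subset_left _ _

theorem discAmb_eq_sum {N : ℕ} {a : ℤ → ℂ} (ha : Function.support a ⊆ Set.Icc 0 (N : ℤ))
    (k : ℤ) (t : ℝ) :
    discAmb a k t = ∑ j ∈ Icc (0 : ℤ) N, ambProd a k j * exp (I * j * t) := by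
  refine finsum_eq_sum_of_support_subset _ fun j hj => ?_
  rw [coe_Icc]
  exact ha (left_ne_zero_of_mul (left_ne_zero_of_mul hj))

theorem sq_norm_discAmb {N : ℕ} {a : ℤ → ℂ} (ha : Function.support a ⊆ Set.Icc 0 (N : ℤ))
    (k : ℤ) (t : ℝ) :
    (‖discAmb a k t‖ : ℂ) ^ 2 =
      ∑ m ∈ Icc (-N : ℤ) N, autocorr N (ambProd a k) m * exp (I * m * t) := by
  rw [← mul_conj', discAmb_eq_sum ha,
    sum_mul_exp_mul_conj_eq_sum_autocorr ((support_ambProd_subset a k).trans ha)]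

theorem norm_discAmb_eq_iff {N : ℕ} {a b : ℤ → ℂ} (ha : Function.support a ⊆ Set.Icc 0 (N : ℤ))
    (hb : Function.support b ⊆ Set.Icc 0 (N : ℤ)) (k : ℤ) :
    (∀ t : ℝ, ‖discAmb a k t‖ = ‖discAmb b k t‖) ↔
      ∀ m, autocorr N (ambProd a k) m = autocorr N (ambProd b k) m := by
  constructor
  · intro h m
    by_cases hm : m ∈ Icc (-N : ℤ) N
    · refine eq_of_forall_sum_mul_exp_eq (fun t => ?_) hm
      rw [← sq_norm_discAmb ha, ← sq_norm_discAmb hb, h t]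
    · rw [autocorr_eq_zero_of_notMem ((support_ambProd_subset a k).trans ha) hm,
        autocorr_eq_zero_of_notMem ((support_ambProd_subset b k).trans hb) hm]
  · intro h t
    have hsq : (‖discAmb a k t‖ : ℂ) ^ 2 = (‖discAmb b k t‖ : ℂ) ^ 2 := by
      simp only [sq_norm_discAmb ha, sq_norm_discAmb hb, h]
    exact (pow_left_inj₀ (norm_nonneg _) (norm_nonneg _) two_ne_zero).mp (mod_cast hsq)

theorem ambMatrix_add_sub (d : ℤ → ℂ) (u v : ℤ) : ambMatrix d (u + v) (u - v) = d u * d v := by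
  rw [ambMatrix, if_pos (by omega)]
  congr 2 <;> omega

theorem exists_of_ambMatrix_ne_zero {d : ℤ → ℂ} {j i : ℤ} (h : ambMatrix d j i ≠ 0) :
    ∃ u v, j = u + v ∧ i = u - v ∧ d u ≠ 0 ∧ d v ≠ 0 := by
  rw [ambMatrix] at h
  split_ifs at h with hji
  · exact ⟨(j + i) / 2, (j - i) / 2, by omega, by omega, left_ne_zero_of_mul h,
      right_ne_zero_of_mul h⟩
  · exact absurd rfl h

/-- The entry `(K_d* K_d)_{i,j}`. -/
noncomputable def ambGram (d : ℤ → ℂ) (i j : ℤ) : ℂ :=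
  ∑ᶠ l : ℤ, conj (ambMatrix d l i) * ambMatrix d l j

theorem ambGram_eq_zero_of_odd (d : ℤ → ℂ) {i j : ℤ} (hij : Odd (i + j)) : ambGram d i j = 0 := by
  refine finsum_eq_zero_of_forall_eq_zero fun l => ?_
  by_contra hne
  obtain ⟨u, v, hl, hi, -⟩ :=
    exists_of_ambMatrix_ne_zero ((map_ne_zero _).mp (left_ne_zero_of_mul hne))
  obtain ⟨u', v', hl', hj, -⟩ := exists_of_ambMatrix_ne_zero (right_ne_zero_of_mul hne)
  obtain ⟨r, hr⟩ := hij
  omega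

theorem ambGram_sub_add {N : ℕ} {a : ℤ → ℂ} (ha : Function.support a ⊆ Set.Icc 0 (N : ℤ))
    (k m : ℤ) : ambGram a (m - k) (m + k) = autocorr N (ambProd a k) m := by
  rw [ambGram, finsum_eq_sum_of_support_subset (s := (Icc (0 : ℤ) N).image (2 * · - m - k)),
    sum_image fun _ _ _ _ h => by omega]
  · refine sum_congr rfl fun J _ => ?_
    have hl : ambMatrix a (2 * J - m - k) (m - k) = a (J - k) * a (J - m) := by
      rw [← ambMatrix_add_sub]; congr 1 <;> ring
    have hr : ambMatrix a (2 * J - m - k) (m + k) = a J * a (J - m - k) := by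
      rw [← ambMatrix_add_sub]; congr 1 <;> ring
    rw [hl, hr, ambProd, ambProd, map_mul, map_mul, conj_conj, sub_right_comm]
    ring
  · intro l hl
    obtain ⟨u, v, rfl, huv, hu, -⟩ := exists_of_ambMatrix_ne_zero (right_ne_zero_of_mul hl)
    rw [coe_image, coe_Icc]
    exact ⟨u, ha hu, (by omega : 2 * u - m - k = u + v)⟩

theorem ambGram_eq_iff {N : ℕ} {a b : ℤ → ℂ} (ha : Function.support a ⊆ Set.Icc 0 (N : ℤ))
    (hb : Function.support b ⊆ Set.Icc 0 (N : ℤ)) :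
    (∀ i j, ambGram a i j = ambGram b i j) ↔
      ∀ k m, autocorr N (ambProd a k) m = autocorr N (ambProd b k) m := by
  constructor
  · intro h k m
    rw [← ambGram_sub_add ha, ← ambGram_sub_add hb]
    exact h _ _
  · intro h i j
    rcases Int.even_or_odd (i + j) with ⟨r, hr⟩ | hodd
    · obtain ⟨k, m, rfl, rfl⟩ : ∃ k m, i = m - k ∧ j = m + k := ⟨r - i, r, by omega, by omega⟩
      rw [ambGram_sub_add ha, ambGram_sub_add hb, h]
    · rw [ambGram_eq_zero_of_odd a hodd, ambGram_eq_zero_of_odd b hodd]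

theorem stmt14 (N : ℕ) (a b : ℤ → ℂ)
    (hsa : ∀ j : ℤ, a j ≠ 0 → 0 ≤ j ∧ j ≤ N)
    (hsb : ∀ j : ℤ, b j ≠ 0 → 0 ≤ j ∧ j ≤ N) :
    (∀ (k : ℤ) (t : ℝ), ‖discAmb a k t‖ = ‖discAmb b k t‖) ↔
      (∀ i j : ℤ,
        ∑ᶠ l : ℤ, (starRingEnd ℂ) (ambMatrix a l i) * ambMatrix a l j
          = ∑ᶠ l : ℤ, (starRingEnd ℂ) (ambMatrix b l i) * ambMatrix b l j) :=
  (forall_congr' fun k => norm_discAmb_eq_iff hsa hsb k).trans (ambGram_eq_iff hsa hsb).symm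
end

section
/- Let α = (α₀,...,α_K) be a finite complex sequence and λ ∈ ℂ. Define sequences a and b of length 2K+2 by a_{2p} = α_p, a_{2p+1} = λ·α_p, and b_{2p} = conj(λ)·α_p, b_{2p+1} = α_p. Then a and b are discrete ambiguity partners: |𝒜(a)(k,t)| = |𝒜(b)(k,t)| for all k ∈ ℤ, t ∈ ℝ. -/
/-! Split the sum defining `discAmb` by the parity of `j`. At an odd lag the summands for `a` and
`b` agree one by one. At an even lag `2 * m` both ambiguity functions are `discAmb α m (2 * t)`
times a factor, `1 + |λ|² e^{it}` for `a` and `|λ|² + e^{it}` for `b`, and these have the same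
modulus because `e^{it}` lies on the unit circle. -/

open Function Set

theorem finsum_int_eq_even_add_odd {M : Type*} [AddCommMonoid M] (f : ℤ → M)
    (h0 : (support fun p => f (2 * p)).Finite) (h1 : (support fun p => f (2 * p + 1)).Finite) :
    ∑ᶠ j, f j = ∑ᶠ p, f (2 * p) + ∑ᶠ p, f (2 * p + 1) := by
  have hinj0 : Injective fun p : ℤ => 2 * p := fun x y h => by simpa using h
  have hinj1 : Injective fun p : ℤ => 2 * p + 1 := fun x y h => by simpa using h
  have hcover : range (fun p : ℤ => 2 * p) ∪ range (fun p : ℤ => 2 * p + 1) = univ := by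
    refine eq_univ_of_forall fun j => ?_
    obtain ⟨p, rfl | rfl⟩ := Int.even_or_odd' j
    exacts [Or.inl ⟨p, rfl⟩, Or.inr ⟨p, rfl⟩]
  have hdisj : Disjoint (range fun p : ℤ => 2 * p) (range fun p : ℤ => 2 * p + 1) := by
    rw [disjoint_left]
    rintro _ ⟨p, rfl⟩ ⟨q, hq⟩
    dsimp only at hq
    omega
  have hfin : ∀ g : ℤ → ℤ, (support (f ∘ g)).Finite → (range g ∩ support f).Finite :=
    fun g hg => (hg.image g).subset <| by
      rintro _ ⟨⟨p, rfl⟩, hp⟩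
      exact ⟨p, hp, rfl⟩
  rw [← finsum_mem_univ, ← hcover, finsum_mem_union' hdisj (hfin _ h0) (hfin _ h1),
    finsum_mem_range hinj0, finsum_mem_range hinj1]

theorem discAmb_const_mul (c : ℂ) (a : ℤ → ℂ) (k : ℤ) (t : ℝ) :
    discAmb (fun j => c * a j) k t = Complex.normSq c * discAmb a k t := by
  rw [discAmb, discAmb, mul_finsum, ← Complex.mul_conj]
  refine finsum_congr fun j => ?_
  simp only [map_mul]
  ring

theorem discAmb_two_mul (a : ℤ → ℂ) (m : ℤ) (t : ℝ)
    (h0 : (support fun p => a (2 * p)).Finite) (h1 : (support fun p => a (2 * p + 1)).Finite) :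
    discAmb a (2 * m) t = discAmb (fun p => a (2 * p)) m (2 * t)
      + Complex.exp (Complex.I * t) * discAmb (fun p => a (2 * p + 1)) m (2 * t) := by
  rw [discAmb, finsum_int_eq_even_add_odd, discAmb, discAmb, mul_finsum]
  rotate_left
  · exact h0.subset fun p hp => left_ne_zero_of_mul (left_ne_zero_of_mul hp)
  · exact h1.subset fun p hp => left_ne_zero_of_mul (left_ne_zero_of_mul hp)
  congr 1 <;> refine finsum_congr fun p => ?_
  · rw [← mul_sub]
    push_cast
    ring_nf
  · rw [show 2 * p + 1 - 2 * m = 2 * (p - m) + 1 by ring, mul_left_comm, ← Complex.exp_add]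
    push_cast
    ring_nf

theorem discAmb_odd_lag_eq (α : ℤ → ℂ) (lam : ℂ) (a b : ℤ → ℂ)
    (ha : ∀ p : ℤ, a (2 * p) = α p ∧ a (2 * p + 1) = lam * α p)
    (hb : ∀ p : ℤ, b (2 * p) = (starRingEnd ℂ) lam * α p ∧ b (2 * p + 1) = α p)
    (m : ℤ) (t : ℝ) :
    discAmb a (2 * m + 1) t = discAmb b (2 * m + 1) t := by
  refine finsum_congr fun j => congrArg (· * _) ?_
  obtain ⟨p, rfl | rfl⟩ := Int.even_or_odd' j
  · rw [show 2 * p - (2 * m + 1) = 2 * (p - m - 1) + 1 by ring, (ha p).1, (ha _).2, (hb p).1,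
      (hb _).2, map_mul]
    ring
  · rw [show 2 * p + 1 - (2 * m + 1) = 2 * (p - m) by ring, (ha p).2, (ha _).1, (hb p).2,
      (hb _).1, map_mul, Complex.conj_conj]
    ring

theorem Complex.norm_one_add_ofReal_mul (r : ℝ) {u : ℂ} (hu : ‖u‖ = 1) :
    ‖1 + r * u‖ = ‖r + u‖ := by
  have hu' : u * (starRingEnd ℂ) u = 1 := by
    rw [Complex.mul_conj, Complex.normSq_eq_norm_sq, hu]
    norm_num
  calc ‖1 + r * u‖ = ‖u * (starRingEnd ℂ) (r + u)‖ := by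
        rw [map_add, Complex.conj_ofReal, mul_add, hu']
        ring_nf
    _ = ‖r + u‖ := by rw [norm_mul, hu, one_mul, Complex.norm_conj]

theorem norm_discAmb_two_mul_eq (α : ℤ → ℂ) (hα : (support α).Finite) (lam : ℂ) (a b : ℤ → ℂ)
    (ha : ∀ p : ℤ, a (2 * p) = α p ∧ a (2 * p + 1) = lam * α p)
    (hb : ∀ p : ℤ, b (2 * p) = (starRingEnd ℂ) lam * α p ∧ b (2 * p + 1) = α p)
    (m : ℤ) (t : ℝ) :
    ‖discAmb a (2 * m) t‖ = ‖discAmb b (2 * m) t‖ := by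
  have hα' : ∀ c : ℂ, (support fun p => c * α p).Finite :=
    fun c => hα.subset fun p hp => right_ne_zero_of_mul hp
  have hae : (fun p => a (2 * p)) = α := funext fun p => (ha p).1
  have hao : (fun p => a (2 * p + 1)) = fun p => lam * α p := funext fun p => (ha p).2
  have hbe : (fun p => b (2 * p)) = fun p => (starRingEnd ℂ) lam * α p :=
    funext fun p => (hb p).1
  have hbo : (fun p => b (2 * p + 1)) = α := funext fun p => (hb p).2
  rw [discAmb_two_mul a m t (hae ▸ hα) (hao ▸ hα' lam),
    discAmb_two_mul b m t (hbe ▸ hα' _) (hbo ▸ hα), hae, hao, hbe, hbo,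
    discAmb_const_mul, discAmb_const_mul, Complex.normSq_conj]
  set A := discAmb α m (2 * t)
  set u := Complex.exp (Complex.I * t)
  have hu : ‖u‖ = 1 := Complex.norm_exp_I_mul_ofReal t
  calc ‖A + u * (Complex.normSq lam * A)‖ = ‖1 + Complex.normSq lam * u‖ * ‖A‖ := by
        rw [← norm_mul]; ring_nf
    _ = ‖Complex.normSq lam + u‖ * ‖A‖ := by rw [Complex.norm_one_add_ofReal_mul _ hu]
    _ = ‖Complex.normSq lam * A + u * A‖ := by rw [← norm_mul]; ring_nf

theorem stmt15 (K : ℕ) (α : ℤ → ℂ)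
    (hα : ∀ j : ℤ, α j ≠ 0 → 0 ≤ j ∧ j ≤ K)
    (lam : ℂ) (a b : ℤ → ℂ)
    (ha : ∀ p : ℤ, a (2 * p) = α p ∧ a (2 * p + 1) = lam * α p)
    (hb : ∀ p : ℤ, b (2 * p) = (starRingEnd ℂ) lam * α p ∧ b (2 * p + 1) = α p) :
    ∀ (k : ℤ) (t : ℝ), ‖discAmb a k t‖ = ‖discAmb b k t‖ := by
  intro k t
  obtain ⟨m, rfl | rfl⟩ := Int.even_or_odd' k
  · exact norm_discAmb_two_mul_eq α ((finite_Icc (0 : ℤ) K).subset hα) lam a b ha hb m t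
  · rw [discAmb_odd_lag_eq α lam a b ha hb]
end

section
/- The sequences a = (1,2,0,2,4) and b = (2,4,0,1,2) are discrete ambiguity partners, i.e., |𝒜(a)(k,t)| = |𝒜(b)(k,t)| for all k ∈ ℤ and t ∈ ℝ, but b is not a trivial partner of a: there are no c with |c|=1, β ∈ ℝ, k₀ ∈ ℤ, such that b_j = c·e^{iβj}·a_{j-k₀} for all j, nor b_j = c·e^{iβj}·a_{-j-k₀} for all j. -/
/-- The sequence `(1,2,0,2,4)`. -/
noncomputable def seqA : ℤ → ℂ := fun j =>
  if j = 0 then 1 else if j = 1 then 2 else if j = 3 then 2 else if j = 4 then 4 else 0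

/-- The sequence `(2,4,0,1,2)`. -/
noncomputable def seqB : ℤ → ℂ := fun j =>
  if j = 0 then 2 else if j = 1 then 4 else if j = 3 then 1 else if j = 4 then 2 else 0

/-!
As polynomials, `a(z) = (1 + 2z)(1 + 2z³)` and `b(z) = (1 + 2z)(2 + z³)`: `b` reverses only the
factor in `z³`. Consequently, for every lag `k` the two ambiguity functions either agree or
are `F·(1 + 4u³)` and `F·(4 + u³)` with `u = e^{it}`, and these have equal moduli because
`|x + y v| = |ȳ + x̄ v|` for `|v| = 1`. Neither a shift nor a reflection of `(1,2,0,2,4)` has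
moduli `(2,4,0,1,2)`: aligning the entries of modulus `4` sends the entry `1` of `b` to a zero
of `a`.
-/

open Complex ComplexConjugate

lemma discAmb_eq_sum_range {a : ℤ → ℂ} {N : ℕ} (ha : Function.support a ⊆ Set.Ico 0 N)
    (k : ℤ) (t : ℝ) :
    discAmb a k t = ∑ j ∈ Finset.range N, a j * conj (a (j - k)) * exp (I * t) ^ j := by
  have hsupp : Function.support (fun j : ℤ => a j * conj (a (j - k)) * exp (I * j * t)) ⊆
      ((Finset.range N).map Nat.castEmbedding : Finset ℤ) := by
    intro j hj
    obtain ⟨hj0, hjN⟩ := ha (left_ne_zero_of_mul (left_ne_zero_of_mul hj))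
    lift j to ℕ using hj0
    simpa using hjN
  rw [discAmb, finsum_eq_sum_of_support_subset _ hsupp, Finset.sum_map]
  refine Finset.sum_congr rfl fun j _ => ?_
  rw [Nat.castEmbedding_apply, Int.cast_natCast, ← exp_nat_mul, mul_right_comm I,
    mul_comm (j : ℂ)]

lemma discAmb_eq_zero_of_le_abs {a : ℤ → ℂ} {N : ℕ}
    (ha : Function.support a ⊆ Set.Ico 0 N) {k : ℤ} (hk : N ≤ |k|) (t : ℝ) :
    discAmb a k t = 0 := by
  refine finsum_eq_zero_of_forall_eq_zero fun j => ?_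
  by_contra h
  have hj := ha (left_ne_zero_of_mul (left_ne_zero_of_mul h))
  have hjk := ha (fun h0 => h (by simp [h0]) : a (j - k) ≠ 0)
  simp only [Set.mem_Ico] at hj hjk
  rw [le_abs] at hk
  omega

lemma norm_eq_norm_of_mul_eq_mul {A B X Y : ℂ} (h : A * X = B * Y) (hXY : ‖X‖ = ‖Y‖)
    (hY : Y ≠ 0) : ‖A‖ = ‖B‖ := by
  have := congrArg norm h
  rw [norm_mul, norm_mul, hXY] at this
  exact mul_right_cancel₀ (norm_ne_zero_iff.mpr hY) this

lemma norm_add_mul_eq_norm_conj_add_conj_mul (x y : ℂ) {v : ℂ} (hv : ‖v‖ = 1) :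
    ‖x + y * v‖ = ‖conj y + conj x * v‖ := by
  have hvv : v * conj v = 1 := by rw [mul_conj, normSq_eq_norm_sq, hv]; simp
  calc ‖x + y * v‖ = ‖v * conj (x + y * v)‖ := by rw [norm_mul, hv, one_mul, norm_conj]
    _ = ‖conj y + conj x * v‖ := by
      congr 1; rw [map_add, map_mul]; linear_combination (conj y) * hvv

lemma one_add_four_mul_ne_zero {v : ℂ} (hv : ‖v‖ = 1) : 1 + 4 * v ≠ 0 := by
  intro h
  have := congrArg norm (eq_neg_of_add_eq_zero_right h)
  norm_num [hv] at this

lemma support_seqA_subset : Function.support seqA ⊆ Set.Ico 0 5 := by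
  intro j hj
  rw [Function.mem_support, seqA] at hj
  split_ifs at hj <;> first | (simp only [Set.mem_Ico]; omega) | exact absurd rfl hj

lemma support_seqB_subset : Function.support seqB ⊆ Set.Ico 0 5 := by
  intro j hj
  rw [Function.mem_support, seqB] at hj
  split_ifs at hj <;> first | (simp only [Set.mem_Ico]; omega) | exact absurd rfl hj

lemma norm_discAmb_seqA_eq_norm_discAmb_seqB (k : ℤ) (t : ℝ) :
    ‖discAmb seqA k t‖ = ‖discAmb seqB k t‖ := by
  rcases le_or_gt 5 |k| with hk | hk
  · rw [discAmb_eq_zero_of_le_abs support_seqA_subset hk,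
      discAmb_eq_zero_of_le_abs support_seqB_subset hk]
  rw [discAmb_eq_sum_range support_seqA_subset, discAmb_eq_sum_range support_seqB_subset]
  set u := exp (I * t)
  have hv : ‖u ^ 3‖ = 1 := by simp [u, norm_exp]
  have hreverse : ‖4 + u ^ 3‖ = ‖1 + 4 * u ^ 3‖ := by
    simpa [map_ofNat] using norm_add_mul_eq_norm_conj_add_conj_mul 4 1 hv
  obtain ⟨hk₁, hk₂⟩ := abs_lt.mp hk
  -- For `k ∈ {-1, 0, 1}` the sums are `F * (1 + 4u³)` and `F * (4 + u³)`; otherwise they agree.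
  interval_cases k <;>
    simp only [Finset.sum_range_succ, Finset.sum_range_zero, seqA, seqB, Nat.cast_ofNat,
      Nat.cast_zero, Nat.cast_one, Int.reduceSub, Int.reduceNeg, Int.reduceEq, ↓reduceIte,
      map_ofNat, map_one, map_zero] <;>
    first
    | (congr 1; ring1)
    | exact norm_eq_norm_of_mul_eq_mul (by ring1) hreverse (one_add_four_mul_ne_zero hv)

lemma norm_eq_of_eq_mul_exp {b c x : ℂ} (hc : ‖c‖ = 1) (β : ℝ) (j : ℤ)
    (h : b = c * exp (I * β * j) * x) : ‖b‖ = ‖x‖ := by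
  rw [h, norm_mul, norm_mul, hc, norm_exp]
  simp

lemma eq_four_of_norm_seqA_eq_four {m : ℤ} (h : ‖seqA m‖ = 4) : m = 4 := by
  unfold seqA at h
  split_ifs at h <;> norm_num at h
  assumption

lemma not_forall_norm_seqB_eq_norm_seqA_sub (k₀ : ℤ) :
    ¬ ∀ j, ‖seqB j‖ = ‖seqA (j - k₀)‖ := by
  intro h
  have hk₀ := eq_four_of_norm_seqA_eq_four ((h 1).symm.trans (by norm_num [seqB]))
  have h3 := h 3
  rw [show 3 - k₀ = 6 by omega] at h3
  norm_num [seqA, seqB] at h3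

lemma not_forall_norm_seqB_eq_norm_seqA_neg_sub (k₀ : ℤ) :
    ¬ ∀ j, ‖seqB j‖ = ‖seqA (-j - k₀)‖ := by
  intro h
  have hk₀ := eq_four_of_norm_seqA_eq_four ((h 1).symm.trans (by norm_num [seqB]))
  have h0 := h 0
  rw [show -0 - k₀ = 5 by omega] at h0
  norm_num [seqA, seqB] at h0

theorem stmt16 :
    (∀ (k : ℤ) (t : ℝ), ‖discAmb seqA k t‖ = ‖discAmb seqB k t‖) ∧
    ¬ (∃ (c : ℂ) (β : ℝ) (k₀ : ℤ), ‖c‖ = 1 ∧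
        ((∀ j : ℤ, seqB j = c * Complex.exp (Complex.I * β * j) * seqA (j - k₀)) ∨
         (∀ j : ℤ, seqB j = c * Complex.exp (Complex.I * β * j) * seqA (-j - k₀)))) := by
  refine ⟨norm_discAmb_seqA_eq_norm_discAmb_seqB, ?_⟩
  rintro ⟨c, β, k₀, hc, hshift | hreflect⟩
  · exact not_forall_norm_seqB_eq_norm_seqA_sub k₀ fun j =>
      norm_eq_of_eq_mul_exp hc β j (hshift j)
  · exact not_forall_norm_seqB_eq_norm_seqA_neg_sub k₀ fun j =>
      norm_eq_of_eq_mul_exp hc β j (hreflect j)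
end
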